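/- arXiv:1606.07308 — 8 statements merged into one kernel-verified Lean document; each statement's English description precedes it below -/
import Mathlib

section
/- Let n ≥ 1 be an integer, m > 0, k > 0, Λ > 0, let H: [0,∞) → [0,∞) be continuous, nondecreasing, with H(0) = 0, and let f: ℝ → ℝ be continuous with |f(τ)| ≤ 2|τ|^k and |f(τ) − |τ|^k| ≤ |τ|^k H(|τ|) for all τ ∈ ℝ. Define h(ε) = max( H(4Λ²ε^{2/k}), ε^{2k}, ε² ). Then there exists C < ∞ such that for every ε ∈ (0,m), setting ω = √(m²−ε²), and for all real numbers V̂, Û, Ṽ, Ũ with |V̂| ≤ Λ, m|Û| ≤ Λ and |Ṽ| + m|Ũ| ≤ Λ, setting V = V̂ + Ṽ and U = Û + Ũ, one has: |G₁| ≤ C ( h(ε)(|V|+|U|)^{1+2k} + |V̂|^{1+2k−min(2,1+2k)} |Ṽ|^{min(2,1+2k)} + |Ṽ|^{1+2k} + ε²|V̂| ) and |G₂| ≤ C ( ε² |V²−ε²U²|^k |U| + ε² |Û| ). -/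
/-!
Write `D = V² - ε²U²` and `τ = ε^{2/k} D`, so that `ε⁻² |τ|^k = |D|^k`. Then `ε⁻² f(τ) V`
differs from `|V|^{2k} V` by the error of `f` against `|τ|^k`, which `H` controls since
`|τ| ≤ 4Λ²ε^{2/k}`, plus `(|D|^k - (V²)^k) V`; the Hölder-type estimate
`|a^p - b^p| ≤ (1+p) (a+b)^{p - min p 1} |a-b|^{min p 1}` with `||D| - V²| ≤ ε²U²` makes the
latter of size `ε^{2 min k 1}`. What remains of `G₁` is the second-order Taylor remainder of
`y ↦ |y|^{2k} y` at `V̂`, estimated by the mean value theorem and the same Hölder bound on its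
derivative `(1+2k)|y|^{2k}`, and `(1/(m+ω) - 1/(2m)) V̂ = O(ε²)` because `m - ω = ε²/(m+ω)`.
`G₂` is bounded directly by `|f(τ)| ≤ 2|τ|^k` and the same bound on `m - ω`.
-/

open Real Set Filter

lemma rpow_sub_rpow_le_rpow_sub {p a b : ℝ} (hp₀ : 0 ≤ p) (hp₁ : p ≤ 1) (hb : 0 ≤ b)
    (hba : b ≤ a) : a ^ p - b ^ p ≤ (a - b) ^ p := by
  have h := NNReal.coe_le_coe.2
    (NNReal.rpow_add_le_add_rpow (a - b).toNNReal b.toNNReal hp₀ hp₁)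
  simp only [NNReal.coe_rpow, NNReal.coe_add, Real.coe_toNNReal _ hb,
    Real.coe_toNNReal _ (sub_nonneg.2 hba), sub_add_cancel] at h
  linarith

lemma rpow_sub_rpow_le_mul_rpow_mul_sub {p a b : ℝ} (hp : 1 ≤ p) (hb : 0 ≤ b)
    (hba : b ≤ a) : a ^ p - b ^ p ≤ p * a ^ (p - 1) * (a - b) := by
  have hderiv (x : ℝ) : HasDerivAt (· ^ p) (p * x ^ (p - 1)) x :=
    hasDerivAt_rpow_const (Or.inr hp)
  refine (convex_Icc b a).image_sub_le_mul_sub_of_deriv_le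
    (fun x _ ↦ (hderiv x).continuousAt.continuousWithinAt)
    (fun x _ ↦ (hderiv x).differentiableAt.differentiableWithinAt) (fun x hx ↦ ?_)
    b (left_mem_Icc.2 hba) a (right_mem_Icc.2 hba) hba
  rw [interior_Icc] at hx
  rw [(hderiv x).deriv]
  gcongr <;> linarith [hx.1, hx.2]

lemma abs_rpow_sub_rpow_le {p a b : ℝ} (hp : 0 < p) (ha : 0 ≤ a) (hb : 0 ≤ b) :
    |a ^ p - b ^ p| ≤ (1 + p) * (a + b) ^ (p - min p 1) * |a - b| ^ min p 1 := by
  wlog hba : b ≤ a generalizing a b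
  · rw [abs_sub_comm, abs_sub_comm a, add_comm a]
    exact this hb ha (le_of_not_ge hba)
  rw [abs_of_nonneg (sub_nonneg.2 (rpow_le_rpow hb hba hp.le)),
    abs_of_nonneg (sub_nonneg.2 hba)]
  rcases le_total p 1 with hp₁ | hp₁
  · rw [min_eq_left hp₁, sub_self, rpow_zero, mul_one]
    have := rpow_sub_rpow_le_rpow_sub hp.le hp₁ hb hba
    nlinarith [rpow_nonneg (sub_nonneg.2 hba) p]
  · rw [min_eq_right hp₁, rpow_one]
    calc a ^ p - b ^ p ≤ p * a ^ (p - 1) * (a - b) :=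
          rpow_sub_rpow_le_mul_rpow_mul_sub hp₁ hb hba
      _ ≤ (1 + p) * (a + b) ^ (p - 1) * (a - b) := by gcongr <;> linarith

lemma abs_rpow_sub_rpow_le_of_le_mul {p a b c e s : ℝ} (hp : 0 < p) (ha : 0 ≤ a) (hb : 0 ≤ b)
    (hc : 0 ≤ c) (he : 0 ≤ e) (hs : 0 ≤ s) (hsum : a + b ≤ c * s)
    (hdiff : |a - b| ≤ e * s) :
    |a ^ p - b ^ p| ≤ (1 + p) * c ^ (p - min p 1) * e ^ min p 1 * s ^ p := by
  have hr : 0 ≤ min p 1 := le_min hp.le zero_le_one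
  have hq : 0 ≤ p - min p 1 := sub_nonneg.2 (min_le_left p 1)
  calc |a ^ p - b ^ p| ≤ (1 + p) * (a + b) ^ (p - min p 1) * |a - b| ^ min p 1 :=
        abs_rpow_sub_rpow_le hp ha hb
    _ ≤ (1 + p) * (c * s) ^ (p - min p 1) * (e * s) ^ min p 1 := by gcongr
    _ = (1 + p) * c ^ (p - min p 1) * e ^ min p 1 * s ^ p := by
        have hsp : s ^ (p - min p 1) * s ^ min p 1 = s ^ p := by
          rw [← rpow_add_of_nonneg hs hq hr, sub_add_cancel]
        rw [mul_rpow hc hs, mul_rpow he hs, ← hsp]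
        ring

lemma hasDerivAt_abs_rpow_mul_self {p : ℝ} (hp : 0 < p) (x : ℝ) :
    HasDerivAt (fun y ↦ |y| ^ p * y) ((1 + p) * |x| ^ p) x := by
  rcases eq_or_ne x 0 with rfl | hx
  · rw [hasDerivAt_iff_tendsto_slope]
    have hcont : Tendsto (fun y : ℝ ↦ |y| ^ p) (nhds 0) (nhds 0) := by
      simpa [zero_rpow hp.ne'] using
        ((continuous_abs.rpow_const fun _ ↦ Or.inr hp.le).tendsto 0)
    simp only [abs_zero, zero_rpow hp.ne', mul_zero]
    refine (hcont.mono_left nhdsWithin_le_nhds).congr' ?_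
    filter_upwards [self_mem_nhdsWithin] with y hy
    rw [slope_def_field, abs_zero, zero_rpow hp.ne', zero_mul, sub_zero, sub_zero,
      mul_div_cancel_right₀ _ hy]
  · have h1 : |x| ^ (p - 1) * |x| = |x| ^ p := by
      rw [← rpow_add_one (abs_ne_zero.2 hx), sub_add_cancel]
    refine (((hasDerivAt_abs hx).rpow_const (p := p) (Or.inl (abs_ne_zero.2 hx))).mul
      (hasDerivAt_id x)).congr_deriv ?_
    have h2 : (SignType.sign x : ℝ) * x = |x| := sign_mul_self x
    simp only [id, mul_one]
    linear_combination (p * |x| ^ (p - 1)) * h2 + p * h1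

lemma exists_abs_rpow_mul_self_add_sub_le {p : ℝ} (hp : 0 < p) : ∃ C, ∀ x t : ℝ,
    |(|x + t| ^ p * (x + t) - |x| ^ p * x - (1 + p) * |x| ^ p * t)| ≤
      C * (|x| ^ (1 + p - min 2 (1 + p)) * |t| ^ min 2 (1 + p) + |t| ^ (1 + p)) := by
  set r := min p 1
  set q := p - r
  have hq₀ : 0 ≤ q := sub_nonneg.2 (min_le_left p 1)
  have hmin : min 2 (1 + p) = 1 + r := by
    rw [show (2 : ℝ) = 1 + 1 by norm_num, min_add_add_left, min_comm]
  rw [hmin, show 1 + p - (1 + r) = q by ring]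
  refine ⟨(1 + p) ^ 2 * 3 ^ q, fun x t ↦ ?_⟩
  set M := max |x| |t|
  have hM : 0 ≤ M := (abs_nonneg x).trans (le_max_left _ _)
  have hmvt : |(|x + t| ^ p * (x + t) - |x| ^ p * x - (1 + p) * |x| ^ p * t)| ≤
      (1 + p) ^ 2 * (3 * M) ^ q * |t| ^ r * |t| := by
    have key := (convex_uIcc x (x + t)).norm_image_sub_le_of_norm_hasDerivWithin_le
      (f := fun y ↦ |y| ^ p * y - (1 + p) * |x| ^ p * y)
      (C := (1 + p) ^ 2 * (3 * M) ^ q * |t| ^ r)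
      (fun y _ ↦ ((hasDerivAt_abs_rpow_mul_self hp y).sub
        ((hasDerivAt_id y).const_mul ((1 + p) * |x| ^ p))).hasDerivWithinAt)
      (fun y hy ↦ ?_) left_mem_uIcc right_mem_uIcc
    · simp only [Real.norm_eq_abs, add_sub_cancel_left] at key
      convert key using 2; ring
    have hyx : |y - x| ≤ |t| := by simpa using abs_sub_left_of_mem_uIcc hy
    have hyx' : |(|y| - |x|)| ≤ |t| := (abs_abs_sub_abs_le_abs_sub y x).trans hyx
    have hsum : |y| + |x| ≤ 3 * M := by
      have := abs_sub_abs_le_abs_sub y x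
      linarith [le_max_left |x| |t|, le_max_right |x| |t|]
    simp only [mul_one, Real.norm_eq_abs, ← mul_sub, abs_mul,
      abs_of_pos (by linarith : 0 < 1 + p)]
    calc (1 + p) * |(|y| ^ p - |x| ^ p)|
        ≤ (1 + p) * ((1 + p) * (|y| + |x|) ^ q * |(|y| - |x|)| ^ r) := by
          gcongr; exact abs_rpow_sub_rpow_le hp (abs_nonneg y) (abs_nonneg x)
      _ ≤ (1 + p) * ((1 + p) * (3 * M) ^ q * |t| ^ r) := by gcongr
      _ = (1 + p) ^ 2 * (3 * M) ^ q * |t| ^ r := by ring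
  have hMq : M ^ q ≤ |x| ^ q + |t| ^ q := by
    rw [rpow_max (abs_nonneg x) (abs_nonneg t) hq₀]
    exact max_le_add_of_nonneg (rpow_nonneg (abs_nonneg x) q) (rpow_nonneg (abs_nonneg t) q)
  have ht₁ : |t| ^ r * |t| = |t| ^ (1 + r) := by
    rw [add_comm, rpow_add_one' (abs_nonneg t) (by positivity)]
  have ht₂ : |t| ^ q * |t| ^ (1 + r) = |t| ^ (1 + p) := by
    rw [← rpow_add' (abs_nonneg t) (by positivity)]; congr 1; ring
  calc _ ≤ (1 + p) ^ 2 * (3 * M) ^ q * |t| ^ r * |t| := hmvt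
    _ = (1 + p) ^ 2 * 3 ^ q * (M ^ q * |t| ^ (1 + r)) := by
      rw [mul_rpow (by norm_num) hM, ← ht₁]; ring
    _ ≤ (1 + p) ^ 2 * 3 ^ q * ((|x| ^ q + |t| ^ q) * |t| ^ (1 + r)) := by gcongr
    _ = _ := by rw [add_mul, ht₂]

lemma abs_add_le_max_mul_add {x y a b C D : ℝ} (ha : 0 ≤ a) (hb : 0 ≤ b) (hx : |x| ≤ C * a)
    (hy : |y| ≤ D * b) : |x + y| ≤ max C D * (a + b) := by
  have hC : C * a ≤ max C D * a := mul_le_mul_of_nonneg_right (le_max_left C D) ha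
  have hD : D * b ≤ max C D * b := mul_le_mul_of_nonneg_right (le_max_right C D) hb
  linarith [abs_add_le x y]

lemma abs_sq_sub_sq_le {a b c : ℝ} (ha : |a| ≤ c) (hb : |b| ≤ c) :
    |a ^ 2 - b ^ 2| ≤ c ^ 2 := by
  have ha' := sq_le_sq' (abs_le.1 ha).1 (abs_le.1 ha).2
  have hb' := sq_le_sq' (abs_le.1 hb).1 (abs_le.1 hb).2
  exact abs_le.2 ⟨by nlinarith [sq_nonneg a], by nlinarith [sq_nonneg b]⟩

lemma abs_rpow_two_div_mul_rpow {k ε : ℝ} (hk : k ≠ 0) (hε : 0 ≤ ε) (D : ℝ) :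
    |ε ^ (2 / k) * D| ^ k = ε ^ 2 * |D| ^ k := by
  rw [abs_mul, abs_of_nonneg (rpow_nonneg hε _), mul_rpow (rpow_nonneg hε _) (abs_nonneg D),
    ← rpow_mul hε, div_mul_cancel₀ _ hk, rpow_two]

lemma sub_sqrt_sq_sub_sq_nonneg {m : ℝ} (hm : 0 ≤ m) (ε : ℝ) :
    0 ≤ m - √(m ^ 2 - ε ^ 2) := by
  rw [sub_nonneg, sqrt_le_left hm]
  linarith [sq_nonneg ε]

lemma sub_sqrt_sq_sub_sq_le {m : ℝ} (hm : 0 < m) (ε : ℝ) :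
    m - √(m ^ 2 - ε ^ 2) ≤ ε ^ 2 / m := by
  have hsq : m ^ 2 - ε ^ 2 ≤ √(m ^ 2 - ε ^ 2) ^ 2 :=
    sq_sqrt' (x := m ^ 2 - ε ^ 2) ▸ le_max_left ..
  rw [le_div_iff₀ hm]
  nlinarith [sqrt_nonneg (m ^ 2 - ε ^ 2)]

lemma abs_inv_add_sqrt_sub_inv_le {m : ℝ} (hm : 0 < m) (ε : ℝ) :
    |1 / (m + √(m ^ 2 - ε ^ 2)) - 1 / (2 * m)| ≤ 1 / (2 * m ^ 3) * ε ^ 2 := by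
  set ω := √(m ^ 2 - ε ^ 2)
  have hω : 0 ≤ ω := sqrt_nonneg _
  have hdiff : 1 / (m + ω) - 1 / (2 * m) = (m - ω) / (2 * m * (m + ω)) := by
    field_simp; ring
  rw [hdiff, abs_of_nonneg (div_nonneg (sub_sqrt_sq_sub_sq_nonneg hm.le ε) (by positivity))]
  calc (m - ω) / (2 * m * (m + ω)) ≤ (ε ^ 2 / m) / (2 * m * m) := by
        gcongr
        · exact sub_sqrt_sq_sub_sq_le hm ε
        · linarith
    _ = 1 / (2 * m ^ 3) * ε ^ 2 := by field_simp

lemma abs_rescaled_nonlinearity_sub_rpow_le {k ε R D : ℝ} {H f : ℝ → ℝ} (hk : 0 < k)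
    (hε : 0 < ε) (hH : MonotoneOn H (Ici 0))
    (hf : ∀ τ, |f τ - |τ| ^ k| ≤ |τ| ^ k * H |τ|) (hD : |D| ≤ R) :
    |ε ^ (-2 : ℝ) * f (ε ^ (2 / k) * D) - |D| ^ k| ≤ |D| ^ k * H (R * ε ^ (2 / k)) := by
  set τ := ε ^ (2 / k) * D
  have hscale : ε ^ (-2 : ℝ) * |τ| ^ k = |D| ^ k := by
    rw [abs_rpow_two_div_mul_rpow hk.ne' hε.le, ← mul_assoc, ← rpow_two, ← rpow_add hε]
    norm_num
  have hτ : |τ| ≤ R * ε ^ (2 / k) := by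
    rw [abs_mul, abs_of_pos (rpow_pos_of_pos hε _), mul_comm]
    exact mul_le_mul_of_nonneg_right hD (rpow_nonneg hε.le _)
  have hε₂ : 0 < ε ^ (-2 : ℝ) := rpow_pos_of_pos hε _
  calc |ε ^ (-2 : ℝ) * f τ - |D| ^ k| = ε ^ (-2 : ℝ) * |f τ - |τ| ^ k| := by
        rw [← hscale, ← mul_sub, abs_mul, abs_of_pos hε₂]
    _ ≤ ε ^ (-2 : ℝ) * (|τ| ^ k * H (R * ε ^ (2 / k))) := by
        gcongr
        refine (hf τ).trans (mul_le_mul_of_nonneg_left ?_ (rpow_nonneg (abs_nonneg τ) k))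
        exact hH (abs_nonneg τ) ((abs_nonneg τ).trans hτ) hτ
    _ = |D| ^ k * H (R * ε ^ (2 / k)) := by rw [← hscale, mul_assoc]

lemma exists_abs_rescaled_nonlinearity_mul_sub_le {m k Λ : ℝ} {H f : ℝ → ℝ} (hm : 0 < m)
    (hk : 0 < k) (hH : MonotoneOn H (Ici 0))
    (hf : ∀ τ, |f τ - |τ| ^ k| ≤ |τ| ^ k * H |τ|) :
    ∃ C, ∀ ε ∈ Ioo 0 m, ∀ V U : ℝ, |V| ≤ 2 * Λ → |ε * U| ≤ 2 * Λ →
      |ε ^ (-2 : ℝ) * f (ε ^ (2 / k) * (V ^ 2 - ε ^ 2 * U ^ 2)) * V - |V| ^ (2 * k) * V| ≤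
        C * (max (H (4 * Λ ^ 2 * ε ^ (2 / k))) (max (ε ^ (2 * k)) (ε ^ 2)) *
          (|V| + |U|) ^ (1 + 2 * k)) := by
  set c := (1 + k) * (2 + m ^ 2) ^ (k - min k 1)
  refine ⟨(1 + m ^ 2) ^ k + c, ?_⟩
  rintro ε ⟨hε, hεm⟩ V U hV hU
  set D := V ^ 2 - ε ^ 2 * U ^ 2
  set S := |V| + |U|
  set h := max (H (4 * Λ ^ 2 * ε ^ (2 / k))) (max (ε ^ (2 * k)) (ε ^ 2))
  have hS : 0 ≤ S := by positivity
  have hVS : |V| ≤ S := le_add_of_nonneg_right (abs_nonneg U)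
  have hV2 : V ^ 2 ≤ S ^ 2 := by rw [← sq_abs]; gcongr
  have hUS : U ^ 2 ≤ S ^ 2 := by
    rw [← sq_abs U]; gcongr; exact le_add_of_nonneg_left (abs_nonneg V)
  have hU2 : ε ^ 2 * U ^ 2 ≤ m ^ 2 * S ^ 2 := by gcongr
  have hD : |D| ≤ (1 + m ^ 2) * S ^ 2 :=
    abs_le.2 ⟨by nlinarith [sq_nonneg V], by nlinarith [sq_nonneg (ε * U)]⟩
  have hDV : |(|D| - V ^ 2)| ≤ ε ^ 2 * S ^ 2 := by
    have hrev := abs_abs_sub_abs_le_abs_sub D (V ^ 2)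
    rw [abs_of_nonneg (sq_nonneg V)] at hrev
    refine hrev.trans ?_
    rw [show D - V ^ 2 = -(ε ^ 2 * U ^ 2) by ring, abs_neg, abs_of_nonneg (by positivity)]
    exact mul_le_mul_of_nonneg_left hUS (sq_nonneg ε)
  have hεh : (ε ^ 2) ^ min k 1 ≤ h := by
    rcases le_total k 1 with hk₁ | hk₁
    · rw [min_eq_left hk₁, ← rpow_natCast, ← rpow_mul hε.le]
      exact le_max_of_le_right (le_max_left _ _)
    · rw [min_eq_right hk₁, rpow_one]
      exact le_max_of_le_right (le_max_right _ _)
  have hA₁ : |ε ^ (-2 : ℝ) * f (ε ^ (2 / k) * D) - |D| ^ k| ≤ |D| ^ k * h := by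
    have hDΛ : |D| ≤ 4 * Λ ^ 2 :=
      calc |D| = |V ^ 2 - (ε * U) ^ 2| := by rw [mul_pow]
        _ ≤ (2 * Λ) ^ 2 := abs_sq_sub_sq_le hV hU
        _ = 4 * Λ ^ 2 := by ring
    refine (abs_rescaled_nonlinearity_sub_rpow_le hk hε hH hf hDΛ).trans ?_
    exact mul_le_mul_of_nonneg_left (le_max_left _ _) (rpow_nonneg (abs_nonneg D) k)
  have hA₂ : |(|D| ^ k - (V ^ 2) ^ k)| ≤ c * h * (S ^ 2) ^ k := by
    refine (abs_rpow_sub_rpow_le_of_le_mul (c := 2 + m ^ 2) hk (abs_nonneg D) (sq_nonneg V)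
      (by positivity) (sq_nonneg ε) (sq_nonneg S) (by linarith) hDV).trans ?_
    have hq : 0 ≤ k - min k 1 := sub_nonneg.2 (min_le_left k 1)
    gcongr
  have hDk : |D| ^ k ≤ (1 + m ^ 2) ^ k * (S ^ 2) ^ k := by
    rw [← mul_rpow (by positivity) (sq_nonneg S)]
    gcongr
  have hVk : |V| ^ (2 * k) = (V ^ 2) ^ k := by
    rw [← sq_abs, ← rpow_natCast, ← rpow_mul (abs_nonneg V)]; norm_num
  have hSk : (S ^ 2) ^ k * S = S ^ (1 + 2 * k) := by
    rw [← rpow_natCast, ← rpow_mul hS, add_comm, rpow_add_one' hS (by positivity)]; norm_num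
  calc |ε ^ (-2 : ℝ) * f (ε ^ (2 / k) * D) * V - |V| ^ (2 * k) * V|
      = |(ε ^ (-2 : ℝ) * f (ε ^ (2 / k) * D) - |D| ^ k) + (|D| ^ k - (V ^ 2) ^ k)| * |V| := by
        rw [hVk, ← abs_mul]; ring_nf
    _ ≤ (|D| ^ k * h + c * h * (S ^ 2) ^ k) * S := by
        gcongr
        exact (abs_add_le _ _).trans (add_le_add hA₁ hA₂)
    _ ≤ ((1 + m ^ 2) ^ k * (S ^ 2) ^ k * h + c * h * (S ^ 2) ^ k) * S := by
        gcongr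
    _ = _ := by rw [← hSk]; ring

lemma abs_G₂_le {m k ε : ℝ} {f : ℝ → ℝ} (hm : 0 < m) (hk : 0 < k)
    (hf : ∀ τ, |f τ| ≤ 2 * |τ| ^ k) (hε : 0 ≤ ε) (V U Uh : ℝ) :
    |f (ε ^ (2 / k) * (V ^ 2 - ε ^ 2 * U ^ 2)) * U + (m - √(m ^ 2 - ε ^ 2)) * Uh| ≤
      max 2 (1 / m) * (ε ^ 2 * |V ^ 2 - ε ^ 2 * U ^ 2| ^ k * |U| + ε ^ 2 * |Uh|) := by
  refine abs_add_le_max_mul_add (by positivity) (by positivity) ?_ ?_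
  · rw [abs_mul, ← abs_rpow_two_div_mul_rpow hk.ne' hε, ← mul_assoc]
    exact mul_le_mul_of_nonneg_right (hf _) (abs_nonneg U)
  · rw [abs_mul, abs_of_nonneg (sub_sqrt_sq_sub_sq_nonneg hm.le ε), one_div_mul_eq_div,
      mul_div_right_comm]
    exact mul_le_mul_of_nonneg_right (sub_sqrt_sq_sub_sq_le hm ε) (abs_nonneg Uh)

theorem stmt2_general (m k Λ : ℝ) (hm : 0 < m) (hk : 0 < k)
    (H : ℝ → ℝ)
    (hHmono : MonotoneOn H (Set.Ici 0))
    (f : ℝ → ℝ)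
    (hf1 : ∀ τ : ℝ, |f τ| ≤ 2 * |τ| ^ k)
    (hf2 : ∀ τ : ℝ, |f τ - |τ| ^ k| ≤ |τ| ^ k * H |τ|) :
    ∃ C : ℝ, ∀ ε ∈ Set.Ioo (0 : ℝ) m, ∀ Vh Uh Vt Ut : ℝ,
      |Vh| ≤ Λ → m * |Uh| ≤ Λ → |Vt| + m * |Ut| ≤ Λ →
      (|(-(ε ^ (-2 : ℝ)) * f (ε ^ (2 / k) * ((Vh + Vt) ^ 2 - ε ^ 2 * (Uh + Ut) ^ 2)) * (Vh + Vt)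
            + |Vh| ^ (2 * k) * Vh + (1 + 2 * k) * |Vh| ^ (2 * k) * Vt
            + (1 / (m + Real.sqrt (m ^ 2 - ε ^ 2)) - 1 / (2 * m)) * Vh)|
          ≤ C * (max (H (4 * Λ ^ 2 * ε ^ (2 / k))) (max (ε ^ (2 * k)) (ε ^ 2))
                  * (|Vh + Vt| + |Uh + Ut|) ^ (1 + 2 * k)
                + |Vh| ^ (1 + 2 * k - min 2 (1 + 2 * k)) * |Vt| ^ (min 2 (1 + 2 * k))
                + |Vt| ^ (1 + 2 * k) + ε ^ 2 * |Vh|)) ∧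
      |(f (ε ^ (2 / k) * ((Vh + Vt) ^ 2 - ε ^ 2 * (Uh + Ut) ^ 2)) * (Uh + Ut)
            + (m - Real.sqrt (m ^ 2 - ε ^ 2)) * Uh)|
        ≤ C * (ε ^ 2 * |(Vh + Vt) ^ 2 - ε ^ 2 * (Uh + Ut) ^ 2| ^ k * |Uh + Ut|
              + ε ^ 2 * |Uh|) := by
  obtain ⟨C₁, hC₁⟩ :=
    exists_abs_rescaled_nonlinearity_mul_sub_le (Λ := Λ) hm hk hHmono hf2
  obtain ⟨C₂, hC₂⟩ := exists_abs_rpow_mul_self_add_sub_le (p := 2 * k) (by positivity)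
  refine ⟨max (max (max C₁ C₂) (1 / (2 * m ^ 3))) (max 2 (1 / m)), ?_⟩
  rintro ε ⟨hε, hεm⟩ Vh Uh Vt Ut hVh hUh hVUt
  have hV : |Vh + Vt| ≤ 2 * Λ := by
    linarith [abs_add_le Vh Vt, mul_nonneg hm.le (abs_nonneg Ut)]
  have hU : |ε * (Uh + Ut)| ≤ 2 * Λ := by
    rw [abs_mul, abs_of_pos hε]
    nlinarith [abs_add_le Uh Ut, abs_nonneg (Uh + Ut), abs_nonneg Vt]
  constructor
  · have hA₄ : |(1 / (m + √(m ^ 2 - ε ^ 2)) - 1 / (2 * m)) * Vh| ≤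
        1 / (2 * m ^ 3) * (ε ^ 2 * |Vh|) := by
      rw [abs_mul, ← mul_assoc]
      exact mul_le_mul_of_nonneg_right (abs_inv_add_sqrt_sub_inv_le hm ε) (abs_nonneg Vh)
    have hG₁ := abs_add_le_max_mul_add (by positivity) (by positivity)
      (abs_add_le_max_mul_add (by positivity) (by positivity)
        ((abs_neg _).trans_le (hC₁ ε ⟨hε, hεm⟩ _ _ hV hU))
        ((abs_neg _).trans_le (hC₂ Vh Vt)))
      hA₄
    rw [← add_assoc] at hG₁
    refine (le_of_eq ?_).trans
      (hG₁.trans (mul_le_mul_of_nonneg_right (le_max_left _ _) (by positivity)))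
    congr 1; ring
  · exact (abs_G₂_le hm hk hf1 hε.le _ _ Uh).trans
      (mul_le_mul_of_nonneg_right (le_max_right _ _) (by positivity))

/-- pointwise bounds on the nonlinear terms `G₁`, `G₂`.
Here `ω = √(m²−ε²)`, `V = V̂ + Ṽ`, `U = Û + Ũ`,
`G₁ = −ε⁻² f(ε^{2/k}(V²−ε²U²)) V + |V̂|^{2k} V̂ + (1+2k)|V̂|^{2k} Ṽ + (1/(m+ω) − 1/(2m)) V̂`,
`G₂ = f(ε^{2/k}(V²−ε²U²)) U + (m−ω) Û`, and
`h(ε) = max(H(4Λ²ε^{2/k}), ε^{2k}, ε²)`. -/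
theorem stmt2 (n : ℕ) (hn : 1 ≤ n) (m k Λ : ℝ) (hm : 0 < m) (hk : 0 < k) (hΛ : 0 < Λ)
    (H : ℝ → ℝ) (hHcont : ContinuousOn H (Set.Ici 0))
    (hHmono : MonotoneOn H (Set.Ici 0)) (hH0 : H 0 = 0)
    (hHnonneg : ∀ s ∈ Set.Ici (0 : ℝ), 0 ≤ H s)
    (f : ℝ → ℝ) (hfc : Continuous f)
    (hf1 : ∀ τ : ℝ, |f τ| ≤ 2 * |τ| ^ k)
    (hf2 : ∀ τ : ℝ, |f τ - |τ| ^ k| ≤ |τ| ^ k * H |τ|) :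
    ∃ C : ℝ, ∀ ε ∈ Set.Ioo (0 : ℝ) m, ∀ Vh Uh Vt Ut : ℝ,
      |Vh| ≤ Λ → m * |Uh| ≤ Λ → |Vt| + m * |Ut| ≤ Λ →
      (|(-(ε ^ (-2 : ℝ)) * f (ε ^ (2 / k) * ((Vh + Vt) ^ 2 - ε ^ 2 * (Uh + Ut) ^ 2)) * (Vh + Vt)
            + |Vh| ^ (2 * k) * Vh + (1 + 2 * k) * |Vh| ^ (2 * k) * Vt
            + (1 / (m + Real.sqrt (m ^ 2 - ε ^ 2)) - 1 / (2 * m)) * Vh)|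
          ≤ C * (max (H (4 * Λ ^ 2 * ε ^ (2 / k))) (max (ε ^ (2 * k)) (ε ^ 2))
                  * (|Vh + Vt| + |Uh + Ut|) ^ (1 + 2 * k)
                + |Vh| ^ (1 + 2 * k - min 2 (1 + 2 * k)) * |Vt| ^ (min 2 (1 + 2 * k))
                + |Vt| ^ (1 + 2 * k) + ε ^ 2 * |Vh|)) ∧
      |(f (ε ^ (2 / k) * ((Vh + Vt) ^ 2 - ε ^ 2 * (Uh + Ut) ^ 2)) * (Uh + Ut)
            + (m - Real.sqrt (m ^ 2 - ε ^ 2)) * Uh)|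
        ≤ C * (ε ^ 2 * |(Vh + Vt) ^ 2 - ε ^ 2 * (Uh + Ut) ^ 2| ^ k * |Uh + Ut|
              + ε ^ 2 * |Uh|) :=
  stmt2_general m k Λ hm hk H hHmono f hf1 hf2
end

section
/- Let n ≥ 1 be an integer, m > 0, k > 0, ε ∈ (0,m), ω = √(m²−ε²), and let f: ℝ → ℝ be continuous. Let V, U: ℝ → ℝ be continuous, with V even and U odd (so U(0) = 0), differentiable on ℝ∖{0}, and suppose that for all t ≠ 0 one has U'(t) + ((n−1)/t) U(t) + V(t)/(m+ω) = ε^{−2} f(ε^{2/k}(V(t)² − ε²U(t)²)) V(t) and V'(t) + (m+ω) U(t) = f(ε^{2/k}(V(t)² − ε²U(t)²)) U(t). Then V and U are continuously differentiable on all of ℝ, and the function t ↦ U(t)/t (defined for t ≠ 0) extends to a continuous function on ℝ. Moreover, if there is C < ∞ with |V(t)| + |U(t)| ≤ C for all t ∈ ℝ, then V', U', and t ↦ U(t)/t are bounded on ℝ. -/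
open Filter Topology Asymptotics

/-!
Off `t = 0` the system is explicit: `V' = (F - (m + ω)) U` and `(t ^ p U)' = t ^ p h` with
`p = n - 1`, where `F = f (ε ^ (2 / k) (V² - ε² U²))` and `h = (ε⁻² F - (m + ω)⁻¹) V` are continuous.
A continuous function whose derivative off a point extends continuously is differentiable there,
so `V ∈ C¹`. L'Hôpital's rule applied to `t ^ p U(t) / t ^ (p + 1)` gives `U(t) / t → h(0) / n`,
hence `U' = h - p U / t` also extends continuously. If `V, U` are bounded, so is `F` (compactness),
hence so are `V'` and `h`; `U / t` is bounded by `|U|` for `|t| ≥ 1` and by compactness near `0`,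
which bounds `U'`.
-/

theorem contDiff_one_of_hasDerivAt {𝕜 F : Type*} [NontriviallyNormedField 𝕜]
    [NormedAddCommGroup F] [NormedSpace 𝕜 F] {f g : 𝕜 → F}
    (hfg : ∀ x, HasDerivAt f (g x) x) (hg : Continuous g) : ContDiff 𝕜 1 f := by
  refine contDiff_one_iff_deriv.2 ⟨fun x => (hfg x).differentiableAt, ?_⟩
  rwa [show deriv f = g from funext fun x => (hfg x).deriv]

theorem Asymptotics.IsBigO.mul_isBigO_one {α : Type*} {l : Filter α} {f g : α → ℝ}
    (hf : f =O[l] fun _ => (1 : ℝ)) (hg : g =O[l] fun _ => (1 : ℝ)) :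
    (fun x => f x * g x) =O[l] fun _ => (1 : ℝ) :=
  (hf.mul hg).congr_right fun _ => one_mul 1

theorem Continuous.isBigO_one_comp {α E F : Type*} [NormedAddCommGroup E] [ProperSpace E]
    [NormedAddCommGroup F] {f : E → F} {a : α → E} {l : Filter α} (hf : Continuous f)
    (ha : a =O[l] fun _ => (1 : ℝ)) : (fun x => f (a x)) =O[l] fun _ => (1 : ℝ) := by
  obtain ⟨C, hC⟩ := isBigO_iff.1 ha
  have hball : Tendsto a l (𝓟 (Metric.closedBall 0 C)) :=
    tendsto_principal.2 (hC.mono fun x hx => by simpa using hx)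
  exact (hf.continuousOn.isBigO_principal (isCompact_closedBall 0 C) (by simp)).comp_tendsto hball

theorem isBigO_one_of_eq_div_self {H U : ℝ → ℝ} (hH : Continuous H) (hHU : ∀ t ≠ 0, H t = U t / t)
    (hU : U =O[⊤] fun _ => (1 : ℝ)) : H =O[⊤] fun _ => (1 : ℝ) := by
  set K := Metric.closedBall (0 : ℝ) 1
  rw [← principal_univ, ← Set.union_compl_self K, ← sup_principal]
  refine (hH.continuousOn.isBigO_principal (isCompact_closedBall 0 1) (by simp)).sup
    (IsBigO.trans ?_ (hU.mono le_top))
  refine IsBigO.of_bound 1 (eventually_principal.2 fun t ht => ?_)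
  have ht1 : 1 < |t| := by simpa [K] using ht
  rw [hHU t (abs_pos.1 (one_pos.trans ht1)), one_mul, norm_div]
  exact div_le_self (norm_nonneg _) (by simpa using ht1.le)

section SingularLinear

variable {U h : ℝ → ℝ} {p : ℕ}

theorem hasDerivAt_pow_mul_of_hasDerivAt_sub_div_mul {t : ℝ} (ht : t ≠ 0)
    (hU : HasDerivAt U (h t - p / t * U t) t) :
    HasDerivAt (fun s => s ^ p * U s) (t ^ p * h t) t := by
  refine ((hasDerivAt_pow p t).fun_mul hU).congr_deriv ?_
  cases p with
  | zero => simp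
  | succ q =>
    simp only [Nat.cast_succ, add_tsub_cancel_right, pow_succ]
    field_simp
    ring

theorem tendsto_div_self_of_hasDerivAt_sub_div_mul (hU : ContinuousAt U 0) (hU0 : U 0 = 0)
    (hh : ContinuousAt h 0) (hderiv : ∀ t ≠ 0, HasDerivAt U (h t - p / t * U t) t) :
    Tendsto (fun t => U t / t) (𝓝[≠] 0) (𝓝 (h 0 / (p + 1))) := by
  have hnum : Tendsto (fun t => t ^ p * U t) (𝓝[≠] 0) (𝓝 0) := by
    simpa [hU0] using
      ((continuous_pow p).continuousAt.fun_mul hU).tendsto.mono_left nhdsWithin_le_nhds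
  have hden : Tendsto (fun t : ℝ => t ^ (p + 1)) (𝓝[≠] 0) (𝓝 0) := by
    simpa using (continuous_pow (p + 1)).continuousAt.tendsto.mono_left
      (nhdsWithin_le_nhds (a := (0 : ℝ)))
  have hratio : Tendsto (fun t => t ^ p * h t / ((p + 1) * t ^ p)) (𝓝[≠] 0)
      (𝓝 (h 0 / (p + 1))) := by
    refine ((hh.tendsto.mono_left nhdsWithin_le_nhds).div_const _).congr' ?_
    filter_upwards [self_mem_nhdsWithin] with t ht
    field_simp [pow_ne_zero p (show t ≠ 0 from ht)]
  refine (HasDerivAt.lhopital_zero_nhdsNE ?_ ?_ ?_ hnum hden hratio).congr' ?_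
  · filter_upwards [self_mem_nhdsWithin] with t ht
    exact hasDerivAt_pow_mul_of_hasDerivAt_sub_div_mul ht (hderiv t ht)
  · filter_upwards with t
    simpa using hasDerivAt_pow (p + 1) t
  · filter_upwards [self_mem_nhdsWithin] with t ht
    exact mul_ne_zero (by positivity) (pow_ne_zero p ht)
  · filter_upwards [self_mem_nhdsWithin] with t ht
    field_simp [show t ≠ 0 from ht]
    ring

theorem continuous_update_div_self (hU : Continuous U) (hU0 : U 0 = 0) (hh : ContinuousAt h 0)
    (hderiv : ∀ t ≠ 0, HasDerivAt U (h t - p / t * U t) t) :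
    Continuous (Function.update (fun t => U t / t) 0 (h 0 / (p + 1))) := by
  refine continuous_iff_continuousAt.2 fun t => ?_
  rcases eq_or_ne t 0 with rfl | ht
  · exact continuousAt_update_same.2
      (tendsto_div_self_of_hasDerivAt_sub_div_mul hU.continuousAt hU0 hh hderiv)
  · exact (continuousAt_update_of_ne ht).2 (hU.continuousAt.div continuousAt_id ht)

theorem hasDerivAt_sub_mul_update_div_self (hU : Continuous U) (hU0 : U 0 = 0)
    (hh : Continuous h) (hderiv : ∀ t ≠ 0, HasDerivAt U (h t - p / t * U t) t) (t : ℝ) :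
    HasDerivAt U (h t - p * Function.update (fun t => U t / t) 0 (h 0 / (p + 1)) t) t := by
  have hG : Continuous fun s => h s - p * Function.update (fun t => U t / t) 0 (h 0 / (p + 1)) s :=
    hh.sub (continuous_const.mul (continuous_update_div_self hU hU0 hh.continuousAt hderiv))
  refine hasDerivAt_of_hasDerivAt_of_ne' (x := 0) (fun s hs => ?_) hU.continuousAt
    hG.continuousAt t
  rw [Function.update_of_ne hs, mul_div, mul_div_right_comm]
  exact hderiv s hs

end SingularLinear

theorem stmt5_general (n : ℕ) (hn : 1 ≤ n) (m k ε : ℝ) (ω : ℝ)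
    (f : ℝ → ℝ) (hf : Continuous f)
    (V U : ℝ → ℝ) (hVc : Continuous V) (hUc : Continuous U)
    (hUodd : ∀ t, U (-t) = -U t)
    (hVd : ∀ t : ℝ, t ≠ 0 → DifferentiableAt ℝ V t)
    (hUd : ∀ t : ℝ, t ≠ 0 → DifferentiableAt ℝ U t)
    (heq1 : ∀ t : ℝ, t ≠ 0 →
      deriv U t + ((n : ℝ) - 1) / t * U t + V t / (m + ω)
        = ε ^ (-2 : ℝ) * f (ε ^ (2 / k) * (V t ^ 2 - ε ^ 2 * U t ^ 2)) * V t)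
    (heq2 : ∀ t : ℝ, t ≠ 0 →
      deriv V t + (m + ω) * U t
        = f (ε ^ (2 / k) * (V t ^ 2 - ε ^ 2 * U t ^ 2)) * U t) :
    ContDiff ℝ 1 V ∧ ContDiff ℝ 1 U ∧
      (∃ Hc : ℝ → ℝ, Continuous Hc ∧ ∀ t : ℝ, t ≠ 0 → Hc t = U t / t) ∧
      ((∃ C : ℝ, ∀ t, |V t| + |U t| ≤ C) →
        ∃ C' : ℝ, ∀ t : ℝ,
          |deriv V t| ≤ C' ∧ |deriv U t| ≤ C' ∧ (t ≠ 0 → |U t / t| ≤ C')) := by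
  set F : ℝ → ℝ := fun t => f (ε ^ (2 / k) * (V t ^ 2 - ε ^ 2 * U t ^ 2))
  set h : ℝ → ℝ := fun t => ε ^ (-2 : ℝ) * F t * V t - (m + ω)⁻¹ * V t
  set H := Function.update (fun t => U t / t) 0 (h 0 / ((n - 1 : ℕ) + 1))
  have hFc : Continuous F := by fun_prop
  have hhc : Continuous h := by fun_prop
  have hU0 : U 0 = 0 := by linarith [neg_zero (G := ℝ) ▸ hUodd 0]
  have hp : ((n - 1 : ℕ) : ℝ) = n - 1 := by rw [Nat.cast_sub hn, Nat.cast_one]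
  have hV' : ∀ t, HasDerivAt V (F t * U t - (m + ω) * U t) t :=
    hasDerivAt_of_hasDerivAt_of_ne' (x := 0) (fun t ht => (hVd t ht).hasDerivAt.congr_deriv
      (by linear_combination heq2 t ht)) hVc.continuousAt (by fun_prop)
  have hU' : ∀ t ≠ 0, HasDerivAt U (h t - (n - 1 : ℕ) / t * U t) t := fun t ht =>
    (hUd t ht).hasDerivAt.congr_deriv (by rw [hp]; linear_combination heq1 t ht)
  have hHc : Continuous H := continuous_update_div_self hUc hU0 hhc.continuousAt hU'
  have hHU : ∀ t ≠ 0, H t = U t / t := fun t ht => Function.update_of_ne ht ..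
  have hU'' := hasDerivAt_sub_mul_update_div_self hUc hU0 hhc hU'
  refine ⟨contDiff_one_of_hasDerivAt hV' (by fun_prop),
    contDiff_one_of_hasDerivAt hU'' (hhc.sub (continuous_const.mul hHc)),
    ⟨H, hHc, hHU⟩, ?_⟩
  rintro ⟨B, hB⟩
  have hVb : V =O[⊤] fun _ => (1 : ℝ) :=
    isBigO_top.2 ⟨B, fun t => by simpa using (le_add_of_nonneg_right (abs_nonneg _)).trans (hB t)⟩
  have hUb : U =O[⊤] fun _ => (1 : ℝ) :=
    isBigO_top.2 ⟨B, fun t => by simpa using (le_add_of_nonneg_left (abs_nonneg _)).trans (hB t)⟩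
  have hFb : F =O[⊤] fun _ => (1 : ℝ) := hf.isBigO_one_comp <| by
    simpa only [one_pow] using
      ((hVb.pow 2).sub ((hUb.pow 2).const_mul_left (ε ^ 2))).const_mul_left (ε ^ (2 / k))
  have hHb := isBigO_one_of_eq_div_self hHc hHU hUb
  have hdV : deriv V =O[⊤] fun _ => (1 : ℝ) := by
    rw [funext fun t => (hV' t).deriv]
    exact (hFb.mul_isBigO_one hUb).sub (hUb.const_mul_left (m + ω))
  have hdU : deriv U =O[⊤] fun _ => (1 : ℝ) := by
    rw [funext fun t => (hU'' t).deriv]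
    exact ((hFb.const_mul_left _).mul_isBigO_one hVb).sub (hVb.const_mul_left _) |>.sub
        (hHb.const_mul_left _)
  obtain ⟨C, hC⟩ := isBigO_top.1 (hdV.prod_left (hdU.prod_left hHb))
  refine ⟨C, fun t => ?_⟩
  obtain ⟨hV't, hU't, hHt⟩ : |deriv V t| ≤ C ∧ |deriv U t| ≤ C ∧ |H t| ≤ C := by
    simpa [Prod.norm_def] using hC t
  exact ⟨hV't, hU't, fun ht => hHU t ht ▸ hHt⟩

/-- regularity of solutions of the rescaled system, `f ∈ C`:
if `V` (even) and `U` (odd) are continuous on `ℝ`, differentiable away from `0`,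
and solve the system there, then `V, U ∈ C¹(ℝ)` and `t ↦ U(t)/t` extends
continuously to `ℝ`; moreover, if `|V| + |U|` is bounded then so are
`V'`, `U'` and `U(t)/t`. -/
theorem stmt5 (n : ℕ) (hn : 1 ≤ n) (m k ε : ℝ) (hm : 0 < m) (hk : 0 < k)
    (hε : ε ∈ Set.Ioo (0 : ℝ) m) (ω : ℝ) (hω : ω = Real.sqrt (m ^ 2 - ε ^ 2))
    (f : ℝ → ℝ) (hf : Continuous f)
    (V U : ℝ → ℝ) (hVc : Continuous V) (hUc : Continuous U)
    (hVeven : ∀ t, V (-t) = V t) (hUodd : ∀ t, U (-t) = -U t)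
    (hVd : ∀ t : ℝ, t ≠ 0 → DifferentiableAt ℝ V t)
    (hUd : ∀ t : ℝ, t ≠ 0 → DifferentiableAt ℝ U t)
    (heq1 : ∀ t : ℝ, t ≠ 0 →
      deriv U t + ((n : ℝ) - 1) / t * U t + V t / (m + ω)
        = ε ^ (-2 : ℝ) * f (ε ^ (2 / k) * (V t ^ 2 - ε ^ 2 * U t ^ 2)) * V t)
    (heq2 : ∀ t : ℝ, t ≠ 0 →
      deriv V t + (m + ω) * U t
        = f (ε ^ (2 / k) * (V t ^ 2 - ε ^ 2 * U t ^ 2)) * U t) :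
    ContDiff ℝ 1 V ∧ ContDiff ℝ 1 U ∧
      (∃ Hc : ℝ → ℝ, Continuous Hc ∧ ∀ t : ℝ, t ≠ 0 → Hc t = U t / t) ∧
      ((∃ C : ℝ, ∀ t, |V t| + |U t| ≤ C) →
        ∃ C' : ℝ, ∀ t : ℝ,
          |deriv V t| ≤ C' ∧ |deriv U t| ≤ C' ∧ (t ≠ 0 → |U t / t| ≤ C')) :=
  stmt5_general n hn m k ε ω f hf V U hVc hUc hUodd hVd hUd heq1 heq2
end

section
/- Let n ≥ 1 be an integer, m > 0, k > 0, ε ∈ (0,m), ω = √(m²−ε²). Let f: ℝ → ℝ be continuous on ℝ and continuously differentiable on ℝ∖{0}. Let V, U: ℝ → ℝ be continuously differentiable, with V even and U odd, satisfying V(t)² − ε²U(t)² > 0 for all t ∈ ℝ, and suppose that for all t ∈ ℝ one has U'(t) + ((n−1)/t) U(t) + V(t)/(m+ω) = ε^{−2} f(ε^{2/k}(V(t)² − ε²U(t)²)) V(t) and V'(t) + (m+ω) U(t) = f(ε^{2/k}(V(t)² − ε²U(t)²)) U(t), where at t = 0 the quotient U(t)/t is interpreted as U'(0). Then V and U are twice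 continuously differentiable on ℝ, and the function t ↦ U(t)/t (t ≠ 0) extends to a continuously differentiable function on ℝ. -/
/-!
Put `p = n - 1` and `g t = f (ε^{2/k} (V t² - ε² U t²))`, which is `C¹` because its argument never
vanishes. The first equation reads `U' + p · U/t = R` with `R = ε⁻² g V - V/(m+ω) ∈ C¹`, i.e.
`(t^p U)' = t^p R`, so `U t / t = t^{-(p+1)} ∫₀ᵗ s^p R s ds = ∫₀¹ σ^p R(σ t) dσ`. The last integral is
`C¹` in `t` by differentiation under the integral sign, and then `U' = R - p · U/t` and
`V' = (g - m - ω) U` are `C¹`.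
-/

open Set

noncomputable def radialIntegral (p : ℕ) (R : ℝ → ℝ) (t : ℝ) : ℝ :=
  ∫ σ in (0 : ℝ)..1, σ ^ p * R (σ * t)

lemma continuous_radialIntegral (p : ℕ) {R : ℝ → ℝ} (hR : Continuous R) :
    Continuous (radialIntegral p R) := by
  unfold radialIntegral
  fun_prop

lemma hasDerivAt_radialIntegral (p : ℕ) {R : ℝ → ℝ} (hR : ContDiff ℝ 1 R) (x : ℝ) :
    HasDerivAt (radialIntegral p R) (radialIntegral (p + 1) (deriv R) x) x := by
  obtain ⟨C, hC⟩ : ∃ C, ∀ y ∈ Metric.closedBall (0 : ℝ) (|x| + 1), ‖deriv R y‖ ≤ C :=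
    (isCompact_closedBall 0 _).exists_bound_of_continuousOn
      (hR.continuous_deriv le_rfl).continuousOn
  refine (intervalIntegral.hasDerivAt_integral_of_dominated_loc_of_deriv_le
    (F := fun y σ => σ ^ p * R (σ * y)) (F' := fun y σ => σ ^ (p + 1) * deriv R (σ * y))
    (bound := fun _ => C) (Metric.ball_mem_nhds x one_pos) ?_ ?_ ?_ ?_ intervalIntegrable_const
    ?_).2
  · exact .of_forall fun y => (by fun_prop : Continuous _).aestronglyMeasurable
  · exact (by fun_prop : Continuous _).intervalIntegrable _ _
  · exact (by fun_prop : Continuous _).aestronglyMeasurable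
  · refine .of_forall fun σ hσ y hy => ?_
    rw [uIoc_of_le zero_le_one] at hσ
    have hσ1 : |σ| ≤ 1 := by rw [abs_of_pos hσ.1]; exact hσ.2
    have hy : |y| ≤ |x| + 1 := by
      have := abs_sub_abs_le_abs_sub y x
      rw [Metric.mem_ball, Real.dist_eq] at hy
      linarith
    have hmem : σ * y ∈ Metric.closedBall (0 : ℝ) (|x| + 1) := by
      rw [mem_closedBall_zero_iff, Real.norm_eq_abs, abs_mul]
      nlinarith [abs_nonneg σ, abs_nonneg y]
    rw [norm_mul, norm_pow, Real.norm_eq_abs]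
    calc |σ| ^ (p + 1) * ‖deriv R (σ * y)‖ ≤ 1 * C :=
          mul_le_mul (pow_le_one₀ (abs_nonneg σ) hσ1) (hC _ hmem) (norm_nonneg _) zero_le_one
      _ = C := one_mul C
  · refine .of_forall fun σ _ y _ => ?_
    exact (((hR.differentiable one_ne_zero (σ * y)).hasDerivAt.comp y
      ((hasDerivAt_id y).const_mul σ)).const_mul (σ ^ p)).congr_deriv (by ring)

lemma contDiff_radialIntegral {n : ℕ} (p : ℕ) {R : ℝ → ℝ} (hR : ContDiff ℝ n R) :
    ContDiff ℝ n (radialIntegral p R) := by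
  induction n generalizing p R with
  | zero => exact contDiff_zero.2 (continuous_radialIntegral p (contDiff_zero.1 hR))
  | succ n ih =>
    have hR1 : ContDiff ℝ 1 R := hR.of_le (by exact_mod_cast Nat.le_add_left 1 n)
    rw [Nat.cast_succ, contDiff_succ_iff_deriv] at hR ⊢
    refine ⟨fun x => (hasDerivAt_radialIntegral p hR1 x).differentiableAt, by simp, ?_⟩
    rw [show deriv (radialIntegral p R) = radialIntegral (p + 1) (deriv R) from
      funext fun x => (hasDerivAt_radialIntegral p hR1 x).deriv]
    exact ih (p + 1) hR.2.2

lemma radialIntegral_apply_zero (p : ℕ) (R : ℝ → ℝ) : radialIntegral p R 0 = R 0 / (p + 1) := by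
  simp [radialIntegral, intervalIntegral.integral_mul_const, integral_pow]
  ring

lemma pow_succ_mul_radialIntegral (p : ℕ) (R : ℝ → ℝ) (t : ℝ) :
    t ^ (p + 1) * radialIntegral p R t = ∫ s in (0 : ℝ)..t, s ^ p * R s := by
  rcases eq_or_ne t 0 with rfl | ht
  · simp
  have h : ∀ σ : ℝ, σ ^ p * R (σ * t) = (t ^ p)⁻¹ * ((σ * t) ^ p * R (σ * t)) := fun σ => by
    rw [mul_pow]; field_simp
  simp only [radialIntegral, h, intervalIntegral.integral_const_mul,
    intervalIntegral.integral_comp_mul_right (fun s => s ^ p * R s) ht, zero_mul, one_mul,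
    smul_eq_mul]
  field_simp
  ring

section

variable {p : ℕ} {U R : ℝ → ℝ}

lemma dslope_zero_eq_ite (hU0 : U 0 = 0) (t : ℝ) :
    dslope U 0 t = if t = 0 then deriv U 0 else U t / t := by
  split_ifs with ht
  · rw [ht, dslope_same]
  · rw [dslope_of_ne U ht, slope_def_field, hU0, sub_zero, sub_zero]

lemma hasDerivAt_pow_mul_sub_of_deriv_add (hU : Differentiable ℝ U)
    (h : ∀ t, deriv U t + p * dslope U 0 t = R t) (t : ℝ) :
    HasDerivAt (fun s => s ^ p * (U s - U 0)) (t ^ p * R t) t := by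
  refine ((hasDerivAt_pow p t).mul ((hU t).hasDerivAt.sub_const (U 0))).congr_deriv ?_
  rw [← h t, ← sub_smul_dslope U 0 t, smul_eq_mul, sub_zero]
  cases p with
  | zero => simp
  | succ q => push_cast; ring

lemma integral_pow_mul_of_deriv_add (hU : Differentiable ℝ U) (hR : Continuous R)
    (h : ∀ t, deriv U t + p * dslope U 0 t = R t) (t : ℝ) :
    ∫ s in (0 : ℝ)..t, s ^ p * R s = t ^ p * (U t - U 0) := by
  rw [intervalIntegral.integral_eq_sub_of_hasDerivAt
    (fun s _ => hasDerivAt_pow_mul_sub_of_deriv_add hU h s)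
    ((by fun_prop : Continuous fun s => s ^ p * R s).intervalIntegrable _ _)]
  simp

theorem dslope_eq_radialIntegral_of_deriv_add (hU : Differentiable ℝ U) (hR : Continuous R)
    (h : ∀ t, deriv U t + p * dslope U 0 t = R t) :
    dslope U 0 = radialIntegral p R := by
  funext t
  rcases eq_or_ne t 0 with rfl | ht
  · have h0 := h 0
    rw [dslope_same] at h0 ⊢
    rw [radialIntegral_apply_zero, eq_div_iff (by positivity)]
    linarith
  · apply mul_left_cancel₀ (pow_ne_zero (p + 1) ht)
    rw [pow_succ_mul_radialIntegral, integral_pow_mul_of_deriv_add hU hR h,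
      ← sub_smul_dslope U 0 t, smul_eq_mul, sub_zero, pow_succ, mul_assoc]

theorem contDiff_dslope_of_deriv_add {n : ℕ} (hU : Differentiable ℝ U) (hR : ContDiff ℝ n R)
    (h : ∀ t, deriv U t + p * dslope U 0 t = R t) :
    ContDiff ℝ n (dslope U 0) := by
  rw [dslope_eq_radialIntegral_of_deriv_add hU hR.continuous h]
  exact contDiff_radialIntegral p hR

end

theorem stmt6_general (n : ℕ) (hn : 1 ≤ n) (m k ε : ℝ)
    (hε : ε ∈ Set.Ioo (0 : ℝ) m) (ω : ℝ)
    (f : ℝ → ℝ) (hf1 : ContDiffOn ℝ 1 f {(0 : ℝ)}ᶜ)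
    (V U : ℝ → ℝ) (hV : ContDiff ℝ 1 V) (hU : ContDiff ℝ 1 U)
    (hUodd : ∀ t, U (-t) = -U t)
    (hpos : ∀ t, 0 < V t ^ 2 - ε ^ 2 * U t ^ 2)
    (heq1 : ∀ t : ℝ,
      deriv U t + ((n : ℝ) - 1) * (if t = 0 then deriv U 0 else U t / t)
          + V t / (m + ω)
        = ε ^ (-2 : ℝ) * f (ε ^ (2 / k) * (V t ^ 2 - ε ^ 2 * U t ^ 2)) * V t)
    (heq2 : ∀ t : ℝ,
      deriv V t + (m + ω) * U t
        = f (ε ^ (2 / k) * (V t ^ 2 - ε ^ 2 * U t ^ 2)) * U t) :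
    ContDiff ℝ 2 V ∧ ContDiff ℝ 2 U ∧
      ∃ Hc : ℝ → ℝ, ContDiff ℝ 1 Hc ∧ ∀ t : ℝ, t ≠ 0 → Hc t = U t / t := by
  set g := fun t => f (ε ^ (2 / k) * (V t ^ 2 - ε ^ 2 * U t ^ 2))
  have hg : ContDiff ℝ 1 g :=
    hf1.comp_contDiff (by fun_prop) fun t => (mul_pos (Real.rpow_pos_of_pos hε.1 _) (hpos t)).ne'
  set R := fun t => ε ^ (-2 : ℝ) * g t * V t - V t / (m + ω)
  have hU0 : U 0 = 0 := by linarith [neg_zero (G := ℝ) ▸ hUodd 0]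
  have hODE : ∀ t, deriv U t + ((n - 1 : ℕ) : ℝ) * dslope U 0 t = R t := fun t => by
    rw [Nat.cast_sub hn, Nat.cast_one, dslope_zero_eq_ite hU0]
    linarith [heq1 t]
  have hH : ContDiff ℝ 1 (dslope U 0) :=
    contDiff_dslope_of_deriv_add (hU.differentiable one_ne_zero) (by fun_prop) hODE
  have hdU : deriv U = fun t => R t - ((n - 1 : ℕ) : ℝ) * dslope U 0 t :=
    funext fun t => by linarith [hODE t]
  have hdV : deriv V = fun t => g t * U t - (m + ω) * U t := funext fun t => by linarith [heq2 t]
  refine ⟨?_, ?_, dslope U 0, hH, fun t ht => by rw [dslope_zero_eq_ite hU0, if_neg ht]⟩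
  · refine (contDiff_succ_iff_deriv (n := 1)).2 ⟨hV.differentiable one_ne_zero, by simp, ?_⟩
    rw [hdV]; fun_prop
  · refine (contDiff_succ_iff_deriv (n := 1)).2 ⟨hU.differentiable one_ne_zero, by simp, ?_⟩
    rw [hdU]; fun_prop

/-- improved regularity, `f ∈ C¹(ℝ∖{0}) ∩ C(ℝ)`:
if `V` (even) and `U` (odd) are `C¹`, `V² − ε²U² > 0` everywhere, and they solve
the rescaled system (with `U(t)/t` read as `U'(0)` at `t = 0`), then
`V, U ∈ C²(ℝ)` and `t ↦ U(t)/t` extends to a `C¹` function on `ℝ`. -/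
theorem stmt6 (n : ℕ) (hn : 1 ≤ n) (m k ε : ℝ) (hm : 0 < m) (hk : 0 < k)
    (hε : ε ∈ Set.Ioo (0 : ℝ) m) (ω : ℝ) (hω : ω = Real.sqrt (m ^ 2 - ε ^ 2))
    (f : ℝ → ℝ) (hfc : Continuous f) (hf1 : ContDiffOn ℝ 1 f {(0 : ℝ)}ᶜ)
    (V U : ℝ → ℝ) (hV : ContDiff ℝ 1 V) (hU : ContDiff ℝ 1 U)
    (hVeven : ∀ t, V (-t) = V t) (hUodd : ∀ t, U (-t) = -U t)
    (hpos : ∀ t, 0 < V t ^ 2 - ε ^ 2 * U t ^ 2)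
    (heq1 : ∀ t : ℝ,
      deriv U t + ((n : ℝ) - 1) * (if t = 0 then deriv U 0 else U t / t)
          + V t / (m + ω)
        = ε ^ (-2 : ℝ) * f (ε ^ (2 / k) * (V t ^ 2 - ε ^ 2 * U t ^ 2)) * V t)
    (heq2 : ∀ t : ℝ,
      deriv V t + (m + ω) * U t
        = f (ε ^ (2 / k) * (V t ^ 2 - ε ^ 2 * U t ^ 2)) * U t) :
    ContDiff ℝ 2 V ∧ ContDiff ℝ 2 U ∧
      ∃ Hc : ℝ → ℝ, ContDiff ℝ 1 Hc ∧ ∀ t : ℝ, t ≠ 0 → Hc t = U t / t :=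
  stmt6_general n hn m k ε hε ω f hf1 V U hV hU hUodd hpos heq1 heq2
end

section
/- Let n ≥ 1 be an integer, m > 0, k > 0, ε ∈ (0,m) with ω := √(m²−ε²) > m/2, and let f: ℝ → ℝ be continuous with |f(τ)| ≤ 2|τ|^k for all τ. Let T₁ ≥ 2n and let (V,U): [T₁,∞) → ℝ² be continuously differentiable, satisfy U'(t) + ((n−1)/t) U(t) + V(t)/(m+ω) = ε^{−2} f(ε^{2/k}(V(t)² − ε²U(t)²)) V(t) and V'(t) + (m+ω) U(t) = f(ε^{2/k}(V(t)² − ε²U(t)²)) U(t) for all t ≥ T₁, satisfy V(t) > 0 and V(t)/(4m) ≤ U(t) ≤ 2V(t)/m for all t ≥ T₁, and suppose there exist B < ∞ and γ > 0 with |V(t)| + |U(t)| ≤ B e^{−γ t} for all t ≥ T₁. Then there exist constants 0 < c₁ ≤ C₁ < ∞ such that for all t ≥ T₁: c₁ t^{−(n−1)/2} e^{−t} ≤ V(t) and V(t) + U(t) ≤ C₁ t^{−(n−1)/2} e^{−t}. -/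
/-
Put a = m + ω, ν = n - 1, R = V + aU and S = V - aU. The system becomes
R' = -R - ν(R - S)/(2t) + e₁,  S' = S + ν(R - S)/(2t) + e₂,
where the forcing terms e_i are O(e^{-κt} R), since f(τ) = O(|τ|^k) and (V, U) decays
exponentially. The ratio q = S/R stays in [-1, 1] and solves the unstable equation
q' = 2q + O(1/t + e^{-κt}); a bounded solution of it is O(1/t + e^{-κt}), as one sees by
comparing e^{-2t} q with a barrier. Hence log R + t + (ν/2) log t has derivative
νq/(2t) + e₁/R = O(1/t² + e^{-κt}), which is integrable, so it stays bounded. Exponentiating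
gives R ≍ t^{-ν/2} e^{-t}, and V ≍ R ≍ V + U because U ≤ 2V/m.
-/

open Set Filter Topology Real

theorem abs_sub_le_sub_of_abs_deriv_le {T : ℝ} {g g' ρ ρ' : ℝ → ℝ}
    (hg : ∀ t ∈ Ici T, HasDerivAt g (g' t) t) (hρ : ∀ t ∈ Ici T, HasDerivAt ρ (ρ' t) t)
    (hle : ∀ t ∈ Ici T, |g' t| ≤ ρ' t) {s t : ℝ} (hs : T ≤ s) (hst : s ≤ t) :
    |g t - g s| ≤ ρ t - ρ s := by
  have mono : ∀ σ : ℝ, |σ| ≤ 1 → MonotoneOn (fun u => ρ u + σ * g u) (Ici T) := by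
    intro σ hσ
    have hd : ∀ u ∈ Ici T, HasDerivAt (fun u => ρ u + σ * g u) (ρ' u + σ * g' u) u :=
      fun u hu => (hρ u hu).add ((hg u hu).const_mul σ)
    refine monotoneOn_of_hasDerivWithinAt_nonneg (f' := fun u => ρ' u + σ * g' u) (convex_Ici T)
      (fun u hu => (hd u hu).continuousAt.continuousWithinAt) (fun u hu => ?_) (fun u hu => ?_)
    <;> rw [interior_Ici] at hu
    · exact (hd u (Ioi_subset_Ici_self hu)).hasDerivWithinAt
    · have : |σ * g' u| ≤ ρ' u := by
        rw [abs_mul]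
        exact (mul_le_of_le_one_left (abs_nonneg _) hσ).trans (hle u (Ioi_subset_Ici_self hu))
      linarith [neg_abs_le (σ * g' u)]
  have hplus := mono 1 (by norm_num) hs (hs.trans hst) hst
  have hminus := mono (-1) (by norm_num) hs (hs.trans hst) hst
  simp only at hplus hminus
  rw [abs_le]
  constructor <;> linarith

theorem hasDerivAt_exp_neg_mul (c t : ℝ) :
    HasDerivAt (fun u => exp (-c * u)) (-c * exp (-c * t)) t := by
  simpa [mul_comm] using ((hasDerivAt_id t).const_mul (-c)).exp

theorem abs_le_div_of_hasDerivAt_mul_add {T c M : ℝ} (hc : 0 < c) {q h β : ℝ → ℝ}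
    (hq : ∀ t ∈ Ici T, HasDerivAt q (c * q t + h t) t) (hqM : ∀ t ∈ Ici T, |q t| ≤ M)
    (hβ : AntitoneOn β (Ici T)) (hh : ∀ t ∈ Ici T, |h t| ≤ β t) :
    ∀ t ∈ Ici T, |q t| ≤ β t / c := by
  intro t ht
  set w := fun u => exp (-c * u) * q u
  have hw : ∀ u ∈ Ici t, HasDerivAt w (exp (-c * u) * h u) u := by
    intro u hu
    exact ((hasDerivAt_exp_neg_mul c u).mul (hq u (mem_Ici.2 (ht.trans hu)))).congr_deriv
      (by ring)
  have hρ : ∀ u ∈ Ici t,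
      HasDerivAt (fun u => -(β t / c) * exp (-c * u)) (β t * exp (-c * u)) u := by
    intro u _
    exact ((hasDerivAt_exp_neg_mul c u).const_mul (-(β t / c))).congr_deriv
      (by field_simp)
  have hle : ∀ u ∈ Ici t, |exp (-c * u) * h u| ≤ β t * exp (-c * u) := by
    intro u hu
    rw [abs_mul, abs_of_pos (exp_pos _), mul_comm]
    gcongr
    exact (hh u (mem_Ici.2 (ht.trans hu))).trans (hβ ht (mem_Ici.2 (ht.trans hu)) hu)
  have hw0 : Tendsto w atTop (𝓝 0) := by
    have hexp : Tendsto (fun u => exp (-c * u)) atTop (𝓝 0) :=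
      tendsto_exp_atBot.comp (tendsto_id.const_mul_atTop_of_neg (neg_neg_of_pos hc))
    refine squeeze_zero_norm' ?_ (by simpa using hexp.const_mul M)
    filter_upwards [eventually_ge_atTop T] with u hu
    rw [norm_mul, norm_of_nonneg (exp_pos _).le, mul_comm, Real.norm_eq_abs, neg_mul]
    exact mul_le_mul_of_nonneg_right (hqM u hu) (exp_pos _).le
  have hwt : |w t| ≤ β t / c * exp (-c * t) := by
    have hlim : Tendsto (fun s => |w s - w t|) atTop (𝓝 |0 - w t|) := (hw0.sub_const _).abs
    rw [zero_sub, abs_neg] at hlim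
    refine le_of_tendsto hlim ?_
    filter_upwards [eventually_ge_atTop t] with s hs
    have := abs_sub_le_sub_of_abs_deriv_le hw hρ hle le_rfl hs
    have : 0 ≤ β t / c * exp (-c * s) :=
      mul_nonneg (div_nonneg ((abs_nonneg _).trans (hh t ht)) hc.le) (exp_pos _).le
    linarith
  rw [abs_mul, abs_of_pos (exp_pos _), mul_comm] at hwt
  exact le_of_mul_le_mul_right hwt (exp_pos _)

theorem exists_abs_le_of_abs_deriv_le_inv_sq_add_exp {T A K κ : ℝ} (hT : 0 < T) (hA : 0 ≤ A)
    (hK : 0 ≤ K) (hκ : 0 < κ) {g g' : ℝ → ℝ} (hg : ∀ t ∈ Ici T, HasDerivAt g (g' t) t)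
    (hle : ∀ t ∈ Ici T, |g' t| ≤ A / t ^ 2 + K * exp (-κ * t)) :
    ∃ C, ∀ t ∈ Ici T, |g t| ≤ C := by
  set ρ := fun t => -(A * t⁻¹) - K / κ * exp (-κ * t)
  have hρ : ∀ t ∈ Ici T, HasDerivAt ρ (A / t ^ 2 + K * exp (-κ * t)) t := by
    intro t ht
    exact (((hasDerivAt_inv (hT.trans_le ht).ne').const_mul A).neg.sub
      ((hasDerivAt_exp_neg_mul κ t).const_mul (K / κ))).congr_deriv (by field_simp; ring)
  refine ⟨|g T| - ρ T, fun t ht => ?_⟩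
  have hsub := abs_sub_le_sub_of_abs_deriv_le hg hρ hle le_rfl ht
  have hρt : ρ t ≤ 0 := by
    have : 0 ≤ A * t⁻¹ := mul_nonneg hA (inv_nonneg.2 (hT.le.trans ht))
    have : 0 ≤ K / κ * exp (-κ * t) := by positivity
    simp only [ρ]
    linarith
  linarith [abs_sub_abs_le_abs_sub (g t) (g T)]

theorem abs_div_le_of_diagonal_system {T ν c κ : ℝ} (hT : 0 < T) (hc : 0 ≤ c) (hκ : 0 ≤ κ)
    {R S e₁ e₂ : ℝ → ℝ}
    (hR : ∀ t ∈ Ici T, HasDerivAt R (-R t - ν * (R t - S t) / (2 * t) + e₁ t) t)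
    (hS : ∀ t ∈ Ici T, HasDerivAt S (S t + ν * (R t - S t) / (2 * t) + e₂ t) t)
    (hRpos : ∀ t ∈ Ici T, 0 < R t) (hSR : ∀ t ∈ Ici T, |S t| ≤ R t)
    (he₁ : ∀ t ∈ Ici T, |e₁ t| ≤ c * exp (-κ * t) * R t)
    (he₂ : ∀ t ∈ Ici T, |e₂ t| ≤ c * exp (-κ * t) * R t) :
    ∀ t ∈ Ici T, |S t / R t| ≤ |ν| / (4 * t) + c * exp (-κ * t) := by
  set q := fun t => S t / R t
  set h := fun t => ν * (1 - q t ^ 2) / (2 * t) + (e₂ t - q t * e₁ t) / R t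
  have hq1 : ∀ t ∈ Ici T, |q t| ≤ 1 := fun t ht => by
    rw [abs_div, abs_of_pos (hRpos t ht)]
    exact div_le_one_of_le₀ (hSR t ht) (hRpos t ht).le
  have hq : ∀ t ∈ Ici T, HasDerivAt q (2 * q t + h t) t := fun t ht => by
    have := hRpos t ht
    have := (hT.trans_le ht).ne'
    refine ((hS t ht).div (hR t ht) (hRpos t ht).ne').congr_deriv ?_
    simp only [q, h]
    field_simp
    ring
  have hh : ∀ t ∈ Ici T, |h t| ≤ |ν| / (2 * t) + 2 * c * exp (-κ * t) := by
    intro t ht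
    have hRt := hRpos t ht
    have hqt := hq1 t ht
    have hq2 : |1 - q t ^ 2| ≤ 1 := by
      rw [abs_le]
      constructor <;> nlinarith [sq_nonneg (q t), sq_abs (q t), abs_nonneg (q t)]
    have h1 : |ν * (1 - q t ^ 2) / (2 * t)| ≤ |ν| / (2 * t) := by
      rw [abs_div, abs_mul, abs_of_pos (by linarith [hT.trans_le ht] : 0 < 2 * t)]
      gcongr
      · linarith [hT.trans_le ht]
      · exact mul_le_of_le_one_right (abs_nonneg _) hq2
    have h2 : |(e₂ t - q t * e₁ t) / R t| ≤ 2 * c * exp (-κ * t) := by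
      rw [abs_div, abs_of_pos hRt, div_le_iff₀ hRt]
      have : |q t * e₁ t| ≤ |e₁ t| := by
        rw [abs_mul]
        exact mul_le_of_le_one_left (abs_nonneg _) hqt
      linarith [abs_sub (e₂ t) (q t * e₁ t), he₁ t ht, he₂ t ht]
    exact (abs_add_le _ _).trans (add_le_add h1 h2)
  have hβ : AntitoneOn (fun t => |ν| / (2 * t) + 2 * c * exp (-κ * t)) (Ici T) := by
    intro s hs t _ hst
    have := hT.trans_le hs
    have : exp (-κ * t) ≤ exp (-κ * s) := exp_le_exp.2 (by nlinarith)
    dsimp only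
    gcongr
  intro t ht
  have := hT.trans_le ht
  refine (abs_le_div_of_hasDerivAt_mul_add two_pos hq hq1 hβ hh t ht).trans_eq ?_
  field_simp
  ring

theorem exists_abs_log_add_le_of_diagonal_system {T ν c κ : ℝ} (hT : 0 < T) (hc : 0 ≤ c)
    (hκ : 0 < κ) {R S e₁ : ℝ → ℝ}
    (hR : ∀ t ∈ Ici T, HasDerivAt R (-R t - ν * (R t - S t) / (2 * t) + e₁ t) t)
    (hRpos : ∀ t ∈ Ici T, 0 < R t) (he₁ : ∀ t ∈ Ici T, |e₁ t| ≤ c * exp (-κ * t) * R t)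
    (hSR : ∀ t ∈ Ici T, |S t / R t| ≤ |ν| / (4 * t) + c * exp (-κ * t)) :
    ∃ C, ∀ t ∈ Ici T, |log (R t) + t + ν / 2 * log t| ≤ C := by
  refine exists_abs_le_of_abs_deriv_le_inv_sq_add_exp (A := ν ^ 2 / 8)
    (K := (|ν| / (2 * T) + 1) * c) hT (by positivity) (by positivity) hκ
    (g' := fun t => ν * (S t / R t) / (2 * t) + e₁ t / R t) (fun t ht => ?_) (fun t ht => ?_)
  all_goals have ht0 := hT.trans_le ht; have hRt := hRpos t ht
  · refine ((((hR t ht).log hRt.ne').add (hasDerivAt_id t)).add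
      ((hasDerivAt_log ht0.ne').const_mul (ν / 2))).congr_deriv ?_
    field_simp
    ring
  · have hexp := (exp_pos (-κ * t)).le
    have h1 : |ν * (S t / R t) / (2 * t)| ≤ |ν| / (2 * t) * (|ν| / (4 * t) + c * exp (-κ * t)) := by
      rw [abs_div, abs_mul, abs_of_pos (by positivity : 0 < 2 * t), mul_div_right_comm]
      gcongr
      exact hSR t ht
    have h2 : |e₁ t / R t| ≤ c * exp (-κ * t) := by
      rw [abs_div, abs_of_pos hRt, div_le_iff₀ hRt]
      exact he₁ t ht
    have h3 : |ν| / (2 * t) * (c * exp (-κ * t)) ≤ |ν| / (2 * T) * (c * exp (-κ * t)) := by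
      gcongr
      exact ht
    have h4 : |ν| / (2 * t) * (|ν| / (4 * t)) = ν ^ 2 / 8 / t ^ 2 := by
      field_simp
      rw [← sq_abs ν]
      ring
    refine (abs_add_le _ _).trans ?_
    linarith

theorem bounds_of_abs_log_add_le {r t ν C : ℝ} (hr : 0 < r) (ht : 0 < t)
    (h : |log r + t + ν / 2 * log t| ≤ C) :
    exp (-C) * t ^ (-ν / 2) * exp (-t) ≤ r ∧ r ≤ exp C * t ^ (-ν / 2) * exp (-t) := by
  have key : ∀ x, exp x * t ^ (-ν / 2) * exp (-t) = exp (x - (t + ν / 2 * log t)) := by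
    intro x
    rw [rpow_def_of_pos ht, ← exp_add, ← exp_add]
    ring_nf
  obtain ⟨hlo, hhi⟩ := abs_le.1 h
  rw [key, key, ← exp_log hr, exp_le_exp, exp_le_exp]
  constructor <;> linarith

theorem exists_bounds_of_diagonal_system {T ν c κ : ℝ} (hT : 0 < T) (hc : 0 ≤ c) (hκ : 0 < κ)
    {R S e₁ e₂ : ℝ → ℝ}
    (hR : ∀ t ∈ Ici T, HasDerivAt R (-R t - ν * (R t - S t) / (2 * t) + e₁ t) t)
    (hS : ∀ t ∈ Ici T, HasDerivAt S (S t + ν * (R t - S t) / (2 * t) + e₂ t) t)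
    (hRpos : ∀ t ∈ Ici T, 0 < R t) (hSR : ∀ t ∈ Ici T, |S t| ≤ R t)
    (he₁ : ∀ t ∈ Ici T, |e₁ t| ≤ c * exp (-κ * t) * R t)
    (he₂ : ∀ t ∈ Ici T, |e₂ t| ≤ c * exp (-κ * t) * R t) :
    ∃ c₀ C₀ : ℝ, 0 < c₀ ∧ c₀ ≤ C₀ ∧ ∀ t ∈ Ici T,
      c₀ * t ^ (-ν / 2) * exp (-t) ≤ R t ∧ R t ≤ C₀ * t ^ (-ν / 2) * exp (-t) := by
  obtain ⟨C, hC⟩ := exists_abs_log_add_le_of_diagonal_system hT hc hκ hR hRpos he₁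
    (abs_div_le_of_diagonal_system hT hc hκ.le hR hS hRpos hSR he₁ he₂)
  refine ⟨exp (-C), exp C, exp_pos _, exp_le_exp.2 ?_,
    fun t ht => bounds_of_abs_log_add_le (hRpos t ht) (hT.trans_le ht) (hC t ht)⟩
  linarith [(abs_nonneg _).trans (hC T self_mem_Ici)]

theorem exists_bounds_of_perturbed_system {T ν a c κ : ℝ} (hT : 0 < T) (ha : 0 < a)
    (hc : 0 ≤ c) (hκ : 0 < κ) {V U p r : ℝ → ℝ}
    (hV : ∀ t ∈ Ici T, HasDerivAt V (-(a * U t) + p t * U t) t)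
    (hU : ∀ t ∈ Ici T, HasDerivAt U (-(V t / a) - ν / t * U t + r t * V t) t)
    (hVpos : ∀ t ∈ Ici T, 0 < V t) (hUpos : ∀ t ∈ Ici T, 0 < U t)
    (hpr : ∀ t ∈ Ici T, |p t| + |r t| ≤ c * exp (-κ * t)) :
    ∃ c₀ C₀ : ℝ, 0 < c₀ ∧ c₀ ≤ C₀ ∧ ∀ t ∈ Ici T, c₀ * t ^ (-ν / 2) * exp (-t) ≤ V t + a * U t ∧
      V t + a * U t ≤ C₀ * t ^ (-ν / 2) * exp (-t) := by
  have herr : ∀ t ∈ Ici T, |p t * U t| + |a * (r t * V t)|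
      ≤ (a⁻¹ + a) * c * exp (-κ * t) * (V t + a * U t) := by
    intro t ht
    have hUt := hUpos t ht
    have hVt := hVpos t ht
    rw [abs_mul, abs_mul, abs_mul, abs_of_pos hUt, abs_of_pos hVt, abs_of_pos ha]
    calc |p t| * U t + a * (|r t| * V t)
        ≤ (a⁻¹ + a) * (|p t| + |r t|) * (V t + a * U t) := by
          have expand : (a⁻¹ + a) * (|p t| + |r t|) * (V t + a * U t)
              - (|p t| * U t + a * (|r t| * V t)) = a⁻¹ * |p t| * V t + a⁻¹ * |r t| * V t
                + |r t| * U t + a * |p t| * V t + a * |p t| * (a * U t)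
                + a * |r t| * (a * U t) := by
            field_simp
            ring
          have : 0 ≤ (a⁻¹ + a) * (|p t| + |r t|) * (V t + a * U t)
              - (|p t| * U t + a * (|r t| * V t)) := by
            rw [expand]
            positivity
          linarith
      _ ≤ (a⁻¹ + a) * c * exp (-κ * t) * (V t + a * U t) := by
          rw [mul_assoc _ c]
          gcongr
          exact hpr t ht
  refine exists_bounds_of_diagonal_system (S := fun t => V t - a * U t)
    (e₁ := fun t => p t * U t + a * (r t * V t)) (e₂ := fun t => p t * U t - a * (r t * V t))
    hT (by positivity) hκ (fun t ht => ?_) (fun t ht => ?_) (fun t ht => ?_) (fun t ht => ?_)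
    (fun t ht => (abs_add_le _ _).trans (herr t ht)) (fun t ht => (abs_sub _ _).trans (herr t ht))
  · have := (hT.trans_le ht).ne'
    exact ((hV t ht).add ((hU t ht).const_mul a)).congr_deriv (by field_simp; ring)
  · have := (hT.trans_le ht).ne'
    exact ((hV t ht).sub ((hU t ht).const_mul a)).congr_deriv (by field_simp; ring)
  · exact add_pos (hVpos t ht) (mul_pos ha (hUpos t ht))
  · have := hVpos t ht
    have := mul_pos ha (hUpos t ht)
    exact abs_le.2 ⟨by linarith, by linarith⟩

theorem abs_comp_rpow_mul_le {f : ℝ → ℝ} {k ε : ℝ} (hk : 0 < k) (hε : 0 < ε)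
    (hf : ∀ τ, |f τ| ≤ 2 * |τ| ^ k) (x : ℝ) :
    |f (ε ^ (2 / k) * x)| ≤ 2 * ε ^ 2 * |x| ^ k := by
  refine (hf _).trans_eq ?_
  rw [abs_mul, abs_of_pos (rpow_pos_of_pos hε _), mul_rpow (rpow_nonneg hε.le _) (abs_nonneg _),
    ← rpow_mul hε.le, div_mul_cancel₀ _ hk.ne', rpow_two, mul_assoc]

theorem abs_forcing_add_le {f : ℝ → ℝ} {k ε T B γ : ℝ} (hk : 0 < k) (hε : 0 < ε)
    (hf : ∀ τ, |f τ| ≤ 2 * |τ| ^ k) {V U : ℝ → ℝ}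
    (hB : ∀ t ∈ Ici T, |V t| + |U t| ≤ B * exp (-γ * t)) (t : ℝ) (ht : t ∈ Ici T) :
    |f (ε ^ (2 / k) * (V t ^ 2 - ε ^ 2 * U t ^ 2))|
        + |ε ^ (-2 : ℝ) * f (ε ^ (2 / k) * (V t ^ 2 - ε ^ 2 * U t ^ 2))|
      ≤ (ε ^ 2 + 1) * (2 * ((1 + ε ^ 2) * B ^ 2) ^ k) * exp (-(2 * k * γ) * t) := by
  have hy := hB t ht
  have hx : |V t ^ 2 - ε ^ 2 * U t ^ 2| ≤ (1 + ε ^ 2) * B ^ 2 * exp (-(2 * γ) * t) := by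
    have hV : V t ^ 2 ≤ (B * exp (-γ * t)) ^ 2 := by
      rw [← sq_abs]
      gcongr
      linarith [abs_nonneg (U t)]
    have hU : U t ^ 2 ≤ (B * exp (-γ * t)) ^ 2 := by
      rw [← sq_abs]
      gcongr
      linarith [abs_nonneg (V t)]
    have hexp : (B * exp (-γ * t)) ^ 2 = B ^ 2 * exp (-(2 * γ) * t) := by
      rw [mul_pow, ← exp_nat_mul]
      ring_nf
    rw [abs_le]
    constructor <;> nlinarith [sq_nonneg (V t), sq_nonneg (U t), sq_nonneg ε]
  have hF : |f (ε ^ (2 / k) * (V t ^ 2 - ε ^ 2 * U t ^ 2))|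
      ≤ ε ^ 2 * (2 * ((1 + ε ^ 2) * B ^ 2) ^ k * exp (-(2 * k * γ) * t)) :=
    calc _ ≤ 2 * ε ^ 2 * |V t ^ 2 - ε ^ 2 * U t ^ 2| ^ k := abs_comp_rpow_mul_le hk hε hf _
      _ ≤ 2 * ε ^ 2 * ((1 + ε ^ 2) * B ^ 2 * exp (-(2 * γ) * t)) ^ k := by gcongr
      _ = _ := by
        rw [mul_rpow (by positivity) (exp_pos _).le, ← exp_mul]
        ring_nf
  have hF' : (ε ^ 2)⁻¹ * |f (ε ^ (2 / k) * (V t ^ 2 - ε ^ 2 * U t ^ 2))|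
      ≤ 2 * ((1 + ε ^ 2) * B ^ 2) ^ k * exp (-(2 * k * γ) * t) := by
    rw [inv_mul_le_iff₀ (by positivity)]
    exact hF
  rw [abs_mul, abs_of_pos (rpow_pos_of_pos hε _), rpow_neg hε.le, rpow_two]
  refine (add_le_add hF hF').trans_eq ?_
  ring

theorem exists_bounds_of_bounds_add_mul {T a b x : ℝ} (ha : 0 < a) (hb : 0 ≤ b) {V U : ℝ → ℝ}
    (hVpos : ∀ t ∈ Ici T, 0 < V t) (hUpos : ∀ t ∈ Ici T, 0 < U t)
    (hUV : ∀ t ∈ Ici T, U t ≤ b * V t)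
    (hbd : ∃ c₀ C₀ : ℝ, 0 < c₀ ∧ c₀ ≤ C₀ ∧ ∀ t ∈ Ici T,
      c₀ * t ^ x * exp (-t) ≤ V t + a * U t ∧ V t + a * U t ≤ C₀ * t ^ x * exp (-t)) :
    ∃ c₁ C₁ : ℝ, 0 < c₁ ∧ c₁ ≤ C₁ ∧ ∀ t ∈ Ici T,
      c₁ * t ^ x * exp (-t) ≤ V t ∧ V t + U t ≤ C₁ * t ^ x * exp (-t) := by
  obtain ⟨c₀, C₀, hc₀, hc₀C₀, hbd⟩ := hbd
  have hab : 1 ≤ 1 + a * b := le_add_of_nonneg_right (by positivity)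
  refine ⟨c₀ / (1 + a * b), (1 + a⁻¹) * C₀, by positivity, ?_, fun t ht => ⟨?_, ?_⟩⟩
  · calc c₀ / (1 + a * b) ≤ C₀ := (div_le_self hc₀.le hab).trans hc₀C₀
      _ ≤ (1 + a⁻¹) * C₀ := le_mul_of_one_le_left (hc₀.le.trans hc₀C₀)
          (le_add_of_nonneg_right (by positivity))
  · have hVt := hVpos t ht
    have : a * U t ≤ a * (b * V t) := mul_le_mul_of_nonneg_left (hUV t ht) ha.le
    calc c₀ / (1 + a * b) * t ^ x * exp (-t) = c₀ * t ^ x * exp (-t) / (1 + a * b) := by ring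
      _ ≤ V t := by
        rw [div_le_iff₀ (by positivity)]
        nlinarith [(hbd t ht).1]
  · have : 0 ≤ a * U t + a⁻¹ * V t := add_nonneg (mul_pos ha (hUpos t ht)).le
      (mul_pos (inv_pos.2 ha) (hVpos t ht)).le
    have expand : (1 + a⁻¹) * (V t + a * U t) = V t + U t + (a * U t + a⁻¹ * V t) := by
      field_simp
      ring
    calc V t + U t ≤ (1 + a⁻¹) * (V t + a * U t) := by linarith
      _ ≤ (1 + a⁻¹) * (C₀ * t ^ x * exp (-t)) := by
          gcongr
          exact (hbd t ht).2
      _ = (1 + a⁻¹) * C₀ * t ^ x * exp (-t) := by ring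

theorem stmt7_general (n : ℕ) (hn : 1 ≤ n) (m k ε : ℝ) (hm : 0 < m) (hk : 0 < k)
    (hε : ε ∈ Set.Ioo (0 : ℝ) m) (ω : ℝ)
    (hωm : m / 2 < ω)
    (f : ℝ → ℝ) (hf : ∀ τ : ℝ, |f τ| ≤ 2 * |τ| ^ k)
    (T₁ : ℝ) (hT₁ : 2 * (n : ℝ) ≤ T₁)
    (V U V' U' : ℝ → ℝ)
    (hVd : ∀ t ∈ Set.Ici T₁, HasDerivAt V (V' t) t)
    (hUd : ∀ t ∈ Set.Ici T₁, HasDerivAt U (U' t) t)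
    (heq1 : ∀ t ∈ Set.Ici T₁,
      U' t + ((n : ℝ) - 1) / t * U t + V t / (m + ω)
        = ε ^ (-2 : ℝ) * f (ε ^ (2 / k) * (V t ^ 2 - ε ^ 2 * U t ^ 2)) * V t)
    (heq2 : ∀ t ∈ Set.Ici T₁,
      V' t + (m + ω) * U t = f (ε ^ (2 / k) * (V t ^ 2 - ε ^ 2 * U t ^ 2)) * U t)
    (hVpos : ∀ t ∈ Set.Ici T₁, 0 < V t)
    (hUV : ∀ t ∈ Set.Ici T₁, V t / (4 * m) ≤ U t ∧ U t ≤ 2 * V t / m)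
    (hdecay : ∃ B : ℝ, ∃ γ > 0, ∀ t ∈ Set.Ici T₁, |V t| + |U t| ≤ B * Real.exp (-γ * t)) :
    ∃ c₁ C₁ : ℝ, 0 < c₁ ∧ c₁ ≤ C₁ ∧ ∀ t ∈ Set.Ici T₁,
      c₁ * t ^ (-((n : ℝ) - 1) / 2) * Real.exp (-t) ≤ V t ∧
      V t + U t ≤ C₁ * t ^ (-((n : ℝ) - 1) / 2) * Real.exp (-t) := by
  obtain ⟨hε0, -⟩ := hε
  obtain ⟨B, γ, hγ, hB⟩ := hdecay
  have hT : 0 < T₁ := by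
    have : (1 : ℝ) ≤ n := by exact_mod_cast hn
    linarith
  have ha : 0 < m + ω := by linarith
  have hUpos : ∀ t ∈ Ici T₁, 0 < U t := fun t ht =>
    (div_pos (hVpos t ht) (by positivity)).trans_le (hUV t ht).1
  refine exists_bounds_of_bounds_add_mul (b := 2 / m) ha (by positivity) hVpos hUpos
    (fun t ht => (hUV t ht).2.trans_eq (by ring)) ?_
  exact exists_bounds_of_perturbed_system (ν := n - 1)
    (p := fun t => f (ε ^ (2 / k) * (V t ^ 2 - ε ^ 2 * U t ^ 2)))
    (r := fun t => ε ^ (-2 : ℝ) * f (ε ^ (2 / k) * (V t ^ 2 - ε ^ 2 * U t ^ 2)))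
    hT ha (by positivity) (by positivity)
    (fun t ht => (hVd t ht).congr_deriv (by linarith [heq2 t ht]))
    (fun t ht => (hUd t ht).congr_deriv (by linarith [heq1 t ht])) hVpos hUpos
    (abs_forcing_add_le hk hε0 hf hB)

/-- sharp exponential decay, Lemma on `𝒱, 𝒰`:
a positive `C¹` solution of the rescaled system on `[T₁, ∞)` satisfying
`V/(4m) ≤ U ≤ 2V/m` and decaying exponentially satisfies the two-sided bound
`c₁ t^{−(n−1)/2} e^{−t} ≤ V(t)` and `V(t) + U(t) ≤ C₁ t^{−(n−1)/2} e^{−t}`. -/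
theorem stmt7 (n : ℕ) (hn : 1 ≤ n) (m k ε : ℝ) (hm : 0 < m) (hk : 0 < k)
    (hε : ε ∈ Set.Ioo (0 : ℝ) m) (ω : ℝ) (hω : ω = Real.sqrt (m ^ 2 - ε ^ 2))
    (hωm : m / 2 < ω)
    (f : ℝ → ℝ) (hfc : Continuous f) (hf : ∀ τ : ℝ, |f τ| ≤ 2 * |τ| ^ k)
    (T₁ : ℝ) (hT₁ : 2 * (n : ℝ) ≤ T₁)
    (V U V' U' : ℝ → ℝ)
    (hVd : ∀ t ∈ Set.Ici T₁, HasDerivAt V (V' t) t)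
    (hUd : ∀ t ∈ Set.Ici T₁, HasDerivAt U (U' t) t)
    (hV'c : ContinuousOn V' (Set.Ici T₁)) (hU'c : ContinuousOn U' (Set.Ici T₁))
    (heq1 : ∀ t ∈ Set.Ici T₁,
      U' t + ((n : ℝ) - 1) / t * U t + V t / (m + ω)
        = ε ^ (-2 : ℝ) * f (ε ^ (2 / k) * (V t ^ 2 - ε ^ 2 * U t ^ 2)) * V t)
    (heq2 : ∀ t ∈ Set.Ici T₁,
      V' t + (m + ω) * U t = f (ε ^ (2 / k) * (V t ^ 2 - ε ^ 2 * U t ^ 2)) * U t)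
    (hVpos : ∀ t ∈ Set.Ici T₁, 0 < V t)
    (hUV : ∀ t ∈ Set.Ici T₁, V t / (4 * m) ≤ U t ∧ U t ≤ 2 * V t / m)
    (hdecay : ∃ B : ℝ, ∃ γ > 0, ∀ t ∈ Set.Ici T₁, |V t| + |U t| ≤ B * Real.exp (-γ * t)) :
    ∃ c₁ C₁ : ℝ, 0 < c₁ ∧ c₁ ≤ C₁ ∧ ∀ t ∈ Set.Ici T₁,
      c₁ * t ^ (-((n : ℝ) - 1) / 2) * Real.exp (-t) ≤ V t ∧
      V t + U t ≤ C₁ * t ^ (-((n : ℝ) - 1) / 2) * Real.exp (-t) :=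
  stmt7_general n hn m k ε hm hk hε ω hωm f hf T₁ hT₁ V U V' U' hVd hUd heq1 heq2 hVpos hUV hdecay
end

section
/- Let k > 0, K > k, set κ = min(1, K/k − 1), let m > 0, Λ > 0, ε₁ > 0, c < ∞, and let f: ℝ → ℝ satisfy |f(τ) − |τ|^k| ≤ c|τ|^K for all τ ∈ ℝ. Then there exists C < ∞ such that for every ε ∈ (0, ε₁) and all real numbers V̂, Û, Ṽ, Ũ ∈ [−Λ, Λ], with V = V̂ + Ṽ and U = Û + Ũ, satisfying ε₁|U| ≤ V/2 and |Ṽ| ≤ V̂/2, one has | f(ε^{2/k}(V² − ε²U²)) − ε² V̂^{2k} | ≤ C ( ε^{2+2κ} V̂^{2k} + ε² V̂^{2k−1} |Ṽ| ). -/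
/-!
Put `A = V² − ε²U²`, so that the argument of `f` is `τ = ε^{2/k} A` and `|τ|^k = ε² A^k`.
The hypotheses trap `A` between `(3/16) V̂²` and `(9/4) V̂²`. The error then splits into
`|f τ − |τ|^k| ≤ c τ^K = O(ε^{2K/k} V̂^{2k})`, which is `O(ε^{2+2κ} V̂^{2k})` because
`2K/k ≥ 2 + 2κ`, and `ε² |A^k − V̂^{2k}|`. Since `x ↦ x^k` is Lipschitz on `[3/16, 9/4]`, the
latter is `O(ε² V̂^{2k−2} |A − V̂²|)`, and `|A − V̂²| ≤ (5/2) V̂ |Ṽ| + ε²U²` with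
`ε⁴U² = O(ε^{2+2κ} V̂²)` because `κ ≤ 1`.
-/

open Real Set
open scoped NNReal

lemma exists_lipschitzOnWith_rpow_Icc (k : ℝ) {a : ℝ} (ha : 0 < a) (b : ℝ) :
    ∃ L : ℝ≥0, LipschitzOnWith L (fun x : ℝ => x ^ k) (Icc a b) :=
  ContDiffOn.exists_lipschitzOnWith (n := 1)
    (fun _ hx => (contDiffAt_rpow_const_of_ne (ha.trans_le hx.1).ne').contDiffWithinAt)
    one_ne_zero (convex_Icc a b) isCompact_Icc

lemma exists_abs_rpow_sub_rpow_le (k : ℝ) {a b : ℝ} (ha : 0 < a) (ha1 : a ≤ 1) (hb1 : 1 ≤ b) :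
    ∃ L : ℝ≥0, ∀ A B : ℝ, 0 < B → a * B ≤ A → A ≤ b * B →
      |A ^ k - B ^ k| ≤ L * B ^ (k - 1) * |A - B| := by
  obtain ⟨L, hL⟩ := exists_lipschitzOnWith_rpow_Icc k ha b
  refine ⟨L, fun A B hB haA hAb => ?_⟩
  have hA : 0 < A := by nlinarith
  have hLip := hL.dist_le_mul (A / B) ⟨(le_div_iff₀ hB).2 haA, (div_le_iff₀ hB).2 hAb⟩
    1 ⟨ha1, hb1⟩
  simp only [Real.dist_eq, one_rpow] at hLip
  have hBk : 0 < B ^ k := rpow_pos_of_pos hB k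
  calc |A ^ k - B ^ k| = B ^ k * |(A / B) ^ k - 1| := by
        rw [div_rpow hA.le hB.le, ← abs_of_pos hBk, ← abs_mul, abs_of_pos hBk, mul_sub,
          mul_div_cancel₀ _ hBk.ne', mul_one]
    _ ≤ B ^ k * (L * |A / B - 1|) := by gcongr
    _ = L * B ^ (k - 1) * |A - B| := by
        rw [rpow_sub_one hB.ne', div_sub_one hB.ne', abs_div, abs_of_pos hB]
        ring

lemma rpow_le_rpow_sub_mul_rpow {ε ε₁ p q : ℝ} (hε : 0 < ε) (hεε₁ : ε ≤ ε₁) (hpq : p ≤ q) :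
    ε ^ q ≤ ε₁ ^ (q - p) * ε ^ p :=
  calc ε ^ q = ε ^ (q - p) * ε ^ p := by rw [← rpow_add hε, sub_add_cancel]
    _ ≤ ε₁ ^ (q - p) * ε ^ p := by gcongr

lemma rpow_le_mul_rpow_of_le_mul {k K A B D R : ℝ} (hk : 0 ≤ k) (hkK : k ≤ K) (hA : 0 < A)
    (hB : 0 ≤ B) (hD : 0 < D) (hAB : A ≤ D * B) (hBR : B ≤ R) :
    A ^ K ≤ D ^ K * R ^ (K - k) * B ^ k :=
  calc A ^ K = A ^ k * A ^ (K - k) := by rw [← rpow_add hA, add_sub_cancel]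
    _ ≤ (D * B) ^ k * (D * R) ^ (K - k) := by
        have hAR : A ≤ D * R := hAB.trans (by gcongr)
        gcongr
    _ = D ^ K * R ^ (K - k) * B ^ k := by
        rw [mul_rpow hD.le hB, mul_rpow hD.le (hB.trans hBR)]
        rw [show D ^ K = D ^ k * D ^ (K - k) by rw [← rpow_add hD, add_sub_cancel]]
        ring

lemma rpow_two_div_mul_rpow {ε A k : ℝ} (hε : 0 ≤ ε) (hA : 0 ≤ A) (hk : k ≠ 0) :
    (ε ^ (2 / k) * A) ^ k = ε ^ 2 * A ^ k := by
  rw [mul_rpow (rpow_nonneg hε _) hA, ← rpow_mul hε, div_mul_cancel₀ _ hk]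
  norm_cast

lemma abs_sub_rpow_le_of_abs_sub_abs_rpow_le {f : ℝ → ℝ} {k K c p ε ε₁ A B D R : ℝ}
    (hf : ∀ τ, |f τ - |τ| ^ k| ≤ c * |τ| ^ K) (hk : 0 < k) (hkK : k ≤ K) (hp : p ≤ 2 * K / k)
    (hε : 0 < ε) (hεε₁ : ε ≤ ε₁) (hA : 0 < A) (hB : 0 ≤ B) (hD : 0 < D) (hAB : A ≤ D * B)
    (hBR : B ≤ R) :
    |f (ε ^ (2 / k) * A) - ε ^ 2 * A ^ k|
      ≤ |c| * ε₁ ^ (2 * K / k - p) * D ^ K * R ^ (K - k) * (ε ^ p * B ^ k) := by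
  have hτ : 0 ≤ ε ^ (2 / k) * A := by positivity
  calc |f (ε ^ (2 / k) * A) - ε ^ 2 * A ^ k|
        = |f (ε ^ (2 / k) * A) - |ε ^ (2 / k) * A| ^ k| := by
        rw [abs_of_nonneg hτ, rpow_two_div_mul_rpow hε.le hA.le hk.ne']
    _ ≤ c * |ε ^ (2 / k) * A| ^ K := hf _
    _ ≤ |c| * (ε ^ (2 * K / k) * A ^ K) := by
        rw [abs_of_nonneg hτ, mul_rpow (rpow_nonneg hε.le _) hA.le, ← rpow_mul hε.le,
          div_mul_eq_mul_div]
        exact mul_le_mul_of_nonneg_right (le_abs_self c) (by positivity)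
    _ ≤ |c| * (ε₁ ^ (2 * K / k - p) * ε ^ p * (D ^ K * R ^ (K - k) * B ^ k)) := by
        have hεp := rpow_le_rpow_sub_mul_rpow hε hεε₁ hp
        have hAK := rpow_le_mul_rpow_of_le_mul hk.le hkK hA hB hD hAB hBR
        exact mul_le_mul_of_nonneg_left
          (mul_le_mul hεp hAK (by positivity) ((rpow_nonneg hε.le _).trans hεp)) (abs_nonneg c)
    _ = _ := by ring

section QuadraticForm

variable {ε ε₁ Vh Vt U : ℝ}

lemma sq_mul_sq_le_sq_div_four (hε : 0 ≤ ε) (hεε₁ : ε ≤ ε₁) (hU : ε₁ * |U| ≤ (Vh + Vt) / 2) :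
    ε ^ 2 * U ^ 2 ≤ (Vh + Vt) ^ 2 / 4 := by
  have h : ε * |U| ≤ (Vh + Vt) / 2 := (mul_le_mul_of_nonneg_right hεε₁ (abs_nonneg U)).trans hU
  nlinarith [sq_abs U, mul_nonneg hε (abs_nonneg U)]

lemma sq_sub_sq_mul_sq_le (hVt : |Vt| ≤ Vh / 2) :
    (Vh + Vt) ^ 2 - ε ^ 2 * U ^ 2 ≤ 9 / 4 * Vh ^ 2 := by
  nlinarith [abs_nonneg Vt, sq_nonneg (ε * U), abs_le.1 hVt]

lemma le_sq_sub_sq_mul_sq (hε : 0 ≤ ε) (hεε₁ : ε ≤ ε₁) (hU : ε₁ * |U| ≤ (Vh + Vt) / 2)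
    (hVt : |Vt| ≤ Vh / 2) :
    3 / 16 * Vh ^ 2 ≤ (Vh + Vt) ^ 2 - ε ^ 2 * U ^ 2 := by
  have := sq_mul_sq_le_sq_div_four hε hεε₁ hU
  nlinarith [abs_nonneg Vt, abs_le.1 hVt]

lemma abs_sq_sub_sq_mul_sq_sub_sq_le (hVt : |Vt| ≤ Vh / 2) :
    |(Vh + Vt) ^ 2 - ε ^ 2 * U ^ 2 - Vh ^ 2| ≤ 5 / 2 * Vh * |Vt| + ε ^ 2 * U ^ 2 := by
  have hVh : 0 ≤ Vh := by linarith [abs_nonneg Vt]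
  calc |(Vh + Vt) ^ 2 - ε ^ 2 * U ^ 2 - Vh ^ 2|
        = |(2 * Vh + Vt) * Vt - ε ^ 2 * U ^ 2| := by ring_nf
    _ ≤ |2 * Vh + Vt| * |Vt| + ε ^ 2 * U ^ 2 := by
        refine (abs_sub _ _).trans_eq ?_
        rw [abs_mul, abs_of_nonneg (by positivity : 0 ≤ ε ^ 2 * U ^ 2)]
    _ ≤ 5 / 2 * Vh * |Vt| + ε ^ 2 * U ^ 2 := by
        have : |2 * Vh + Vt| ≤ 5 / 2 * Vh :=
          abs_le.2 ⟨by linarith [abs_le.1 hVt], by linarith [abs_le.1 hVt]⟩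
        gcongr

lemma sq_mul_sq_le_nine_sixteenths (hε₁ : 0 ≤ ε₁) (hU : ε₁ * |U| ≤ (Vh + Vt) / 2)
    (hVt : |Vt| ≤ Vh / 2) :
    ε₁ ^ 2 * U ^ 2 ≤ 9 / 16 * Vh ^ 2 := by
  nlinarith [sq_abs U, mul_nonneg hε₁ (abs_nonneg U), abs_le.1 hVt]

end QuadraticForm

lemma rpow_two_mul {x : ℝ} (hx : 0 ≤ x) (y : ℝ) : x ^ (2 * y) = (x ^ 2) ^ y := by
  exact_mod_cast rpow_natCast_mul hx 2 y

lemma sq_mul_abs_rpow_sub_rpow_le {k p ε ε₁ Vh Vt U : ℝ} {L : ℝ≥0}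
    (hL : ∀ A B : ℝ, 0 < B → 3 / 16 * B ≤ A → A ≤ 9 / 4 * B →
      |A ^ k - B ^ k| ≤ L * B ^ (k - 1) * |A - B|)
    (hp : p ≤ 4) (hε : 0 < ε) (hεε₁ : ε ≤ ε₁) (hVh : 0 < Vh)
    (hU : ε₁ * |U| ≤ (Vh + Vt) / 2) (hVt : |Vt| ≤ Vh / 2) :
    ε ^ 2 * |((Vh + Vt) ^ 2 - ε ^ 2 * U ^ 2) ^ k - Vh ^ (2 * k)|
      ≤ L * (9 / 16) * (ε₁ ^ (4 - p) / ε₁ ^ 2) * (ε ^ p * Vh ^ (2 * k))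
        + 5 * L / 2 * (ε ^ 2 * Vh ^ (2 * k - 1) * |Vt|) := by
  set A := (Vh + Vt) ^ 2 - ε ^ 2 * U ^ 2
  have hB : 0 < Vh ^ 2 := by positivity
  have hε₁ : 0 < ε₁ := hε.trans_le hεε₁
  have hpow := rpow_two_mul hVh.le k
  have hpow' : Vh ^ (2 * k - 1) = (Vh ^ 2) ^ (k - 1) * Vh := by
    rw [rpow_sub hVh, rpow_one, hpow, rpow_sub_one hB.ne']
    field_simp
  have hεU : ε ^ 4 * U ^ 2 ≤ ε₁ ^ (4 - p) / ε₁ ^ 2 * (9 / 16) * ε ^ p * Vh ^ 2 := by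
    have h4 := rpow_le_rpow_sub_mul_rpow hε hεε₁ hp
    have hU' := sq_mul_sq_le_nine_sixteenths hε₁.le hU hVt
    norm_cast at h4
    rw [div_mul_eq_mul_div, div_mul_eq_mul_div, div_mul_eq_mul_div, le_div_iff₀ (by positivity)]
    calc ε ^ 4 * U ^ 2 * ε₁ ^ 2 = (ε₁ ^ 2 * U ^ 2) * ε ^ 4 := by ring
      _ ≤ 9 / 16 * Vh ^ 2 * (ε₁ ^ (4 - p) * ε ^ p) := by gcongr
      _ = _ := by ring
  calc ε ^ 2 * |A ^ k - Vh ^ (2 * k)| ≤ ε ^ 2 * (L * (Vh ^ 2) ^ (k - 1) * |A - Vh ^ 2|) := by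
        rw [hpow]
        gcongr
        exact hL A _ hB (le_sq_sub_sq_mul_sq hε.le hεε₁ hU hVt) (sq_sub_sq_mul_sq_le hVt)
    _ ≤ ε ^ 2 * (L * (Vh ^ 2) ^ (k - 1) * (5 / 2 * Vh * |Vt| + ε ^ 2 * U ^ 2)) := by
        gcongr
        exact abs_sq_sub_sq_mul_sq_sub_sq_le hVt
    _ = L * (Vh ^ 2) ^ (k - 1) * (ε ^ 4 * U ^ 2)
          + 5 * L / 2 * (ε ^ 2 * ((Vh ^ 2) ^ (k - 1) * Vh) * |Vt|) := by ring
    _ ≤ L * (Vh ^ 2) ^ (k - 1) * (ε₁ ^ (4 - p) / ε₁ ^ 2 * (9 / 16) * ε ^ p * Vh ^ 2)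
          + 5 * L / 2 * (ε ^ 2 * ((Vh ^ 2) ^ (k - 1) * Vh) * |Vt|) := by gcongr
    _ = _ := by
        rw [hpow, hpow', ← div_mul_cancel₀ ((Vh ^ 2) ^ k) hB.ne', ← rpow_sub_one hB.ne']
        ring

lemma eq_zero_of_abs_sub_abs_rpow_le {f : ℝ → ℝ} {k K c : ℝ} (hk : k ≠ 0) (hK : K ≠ 0)
    (hf : ∀ τ, |f τ - |τ| ^ k| ≤ c * |τ| ^ K) : f 0 = 0 := by
  simpa [zero_rpow hk, zero_rpow hK] using hf 0

theorem stmt8_general (k K : ℝ) (hk : 0 < k) (hkK : k < K) (Λ ε₁ c : ℝ)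
    (f : ℝ → ℝ) (hf : ∀ τ : ℝ, |f τ - |τ| ^ k| ≤ c * |τ| ^ K) :
    ∃ C : ℝ, ∀ ε ∈ Set.Ioo 0 ε₁, ∀ Vh Uh Vt Ut : ℝ,
      Vh ∈ Set.Icc (-Λ) Λ → Uh ∈ Set.Icc (-Λ) Λ →
      Vt ∈ Set.Icc (-Λ) Λ → Ut ∈ Set.Icc (-Λ) Λ →
      ε₁ * |Uh + Ut| ≤ (Vh + Vt) / 2 → |Vt| ≤ Vh / 2 →
      |f (ε ^ (2 / k) * ((Vh + Vt) ^ 2 - ε ^ 2 * (Uh + Ut) ^ 2)) - ε ^ 2 * Vh ^ (2 * k)|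
        ≤ C * (ε ^ (2 + 2 * min 1 (K / k - 1)) * Vh ^ (2 * k)
              + ε ^ 2 * Vh ^ (2 * k - 1) * |Vt|) := by
  obtain ⟨L, hL⟩ := exists_abs_rpow_sub_rpow_le k (a := 3 / 16) (b := 9 / 4)
    (by norm_num) (by norm_num) (by norm_num)
  set p := 2 + 2 * min 1 (K / k - 1)
  have hp4 : p ≤ 4 := by linarith [min_le_left 1 (K / k - 1)]
  have hpK : p ≤ 2 * K / k := by
    have := min_le_right 1 (K / k - 1)
    rw [mul_div_assoc]; linarith
  set C₁ := |c| * ε₁ ^ (2 * K / k - p) * (9 / 4) ^ K * (Λ ^ 2) ^ (K - k)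
  set C₂ := L * (9 / 16) * (ε₁ ^ (4 - p) / ε₁ ^ 2)
  refine ⟨C₁ + C₂ + 5 * L / 2, ?_⟩
  rintro ε ⟨hε, hεε₁⟩ Vh Uh Vt Ut ⟨-, hVhΛ⟩ - - - hU hVt
  have hε₁ : 0 ≤ ε₁ := hε.le.trans hεε₁.le
  rcases ((abs_nonneg Vt).trans hVt).eq_or_lt with h | hVh
  · have hVh : Vh = 0 := by linarith
    have hVt0 : Vt = 0 := abs_nonpos_iff.1 (by linarith)
    have hU0 : Uh + Ut = 0 :=
      abs_nonpos_iff.1 (nonpos_of_mul_nonpos_right (by linarith) (hε.trans hεε₁))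
    simp [hVh, hVt0, hU0, zero_rpow (by positivity : 2 * k ≠ 0),
      eq_zero_of_abs_sub_abs_rpow_le hk.ne' (hk.trans hkK).ne' hf]
  · have hVh : 0 < Vh := by linarith
    set A := (Vh + Vt) ^ 2 - ε ^ 2 * (Uh + Ut) ^ 2
    have hA : 0 < A := lt_of_lt_of_le (by positivity) (le_sq_sub_sq_mul_sq hε.le hεε₁.le hU hVt)
    have hT₁ : 0 ≤ ε ^ p * Vh ^ (2 * k) := by positivity
    have hT₂ : 0 ≤ ε ^ 2 * Vh ^ (2 * k - 1) * |Vt| := by positivity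
    have hC₁ : 0 ≤ C₁ := by positivity
    have hC₂ : 0 ≤ C₂ := by positivity
    calc _ ≤ |f (ε ^ (2 / k) * A) - ε ^ 2 * A ^ k| + ε ^ 2 * |A ^ k - Vh ^ (2 * k)| :=
          (abs_sub_le _ _ _).trans_eq (by rw [← mul_sub, abs_mul, abs_sq])
      _ ≤ C₁ * (ε ^ p * Vh ^ (2 * k))
            + (C₂ * (ε ^ p * Vh ^ (2 * k)) + 5 * L / 2 * (ε ^ 2 * Vh ^ (2 * k - 1) * |Vt|)) := by
          gcongr
          · rw [rpow_two_mul hVh.le]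
            exact abs_sub_rpow_le_of_abs_sub_abs_rpow_le hf hk hkK.le hpK hε hεε₁.le hA
              (sq_nonneg Vh) (by norm_num) (sq_sub_sq_mul_sq_le hVt) (by gcongr)
          · exact sq_mul_abs_rpow_sub_rpow_le hL hp4 hε hεε₁.le hVh hU hVt
      _ ≤ _ := by
          linarith [mul_nonneg hC₁ hT₂, mul_nonneg hC₂ hT₂,
            mul_nonneg (by positivity : (0 : ℝ) ≤ 5 * L / 2) hT₁]

/-- Lemma `f-is-u`: under `|f(τ) − |τ|^k| ≤ c|τ|^K`, for
`ε ∈ (0, ε₁)` and `V̂, Û, Ṽ, Ũ ∈ [−Λ, Λ]` with `V = V̂+Ṽ`, `U = Û+Ũ`,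
`ε₁|U| ≤ V/2`, `|Ṽ| ≤ V̂/2`, one has
`|f(ε^{2/k}(V²−ε²U²)) − ε² V̂^{2k}| ≤ C (ε^{2+2κ} V̂^{2k} + ε² V̂^{2k−1} |Ṽ|)`
with `κ = min(1, K/k − 1)`. -/
theorem stmt8 (k K : ℝ) (hk : 0 < k) (hkK : k < K) (m Λ ε₁ c : ℝ)
    (hm : 0 < m) (hΛ : 0 < Λ) (hε₁ : 0 < ε₁)
    (f : ℝ → ℝ) (hf : ∀ τ : ℝ, |f τ - |τ| ^ k| ≤ c * |τ| ^ K) :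
    ∃ C : ℝ, ∀ ε ∈ Set.Ioo 0 ε₁, ∀ Vh Uh Vt Ut : ℝ,
      Vh ∈ Set.Icc (-Λ) Λ → Uh ∈ Set.Icc (-Λ) Λ →
      Vt ∈ Set.Icc (-Λ) Λ → Ut ∈ Set.Icc (-Λ) Λ →
      ε₁ * |Uh + Ut| ≤ (Vh + Vt) / 2 → |Vt| ≤ Vh / 2 →
      |f (ε ^ (2 / k) * ((Vh + Vt) ^ 2 - ε ^ 2 * (Uh + Ut) ^ 2)) - ε ^ 2 * Vh ^ (2 * k)|
        ≤ C * (ε ^ (2 + 2 * min 1 (K / k - 1)) * Vh ^ (2 * k)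
              + ε ^ 2 * Vh ^ (2 * k - 1) * |Vt|) :=
  stmt8_general k K hk hkK Λ ε₁ c f hf
end

section
/- Let n ≥ 1 be an integer, m > 0, k > 0. Let u: (0,∞) → ℝ be twice continuously differentiable, strictly positive, nonincreasing (u'(r) ≤ 0 for all r > 0), and satisfy u''(r) = u(r) − 2m u(r)^{1+2k} − ((n−1)/r) u'(r) for all r > 0. If u'(r₀) = 0 for some r₀ > 0, then 2m u(r₀)^{2k} = 1. In particular, u'(r) < 0 for every r > 0 at which 2m u(r)^{2k} ≠ 1. -/
/-- strict monotonicity of the radial groundstate profile: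
if `u > 0` is `C²` on `(0,∞)`, nonincreasing, and satisfies the radial equation
`u'' = u − 2m u^{1+2k} − ((n−1)/r) u'`, then at any critical point `r₀ > 0`
one has `2m u(r₀)^{2k} = 1`; in particular `u'(r) < 0` wherever
`2m u(r)^{2k} ≠ 1`. -/
theorem stmt15 (n : ℕ) (hn : 1 ≤ n) (m k : ℝ) (hm : 0 < m) (hk : 0 < k)
    (u : ℝ → ℝ) (hu : ContDiffOn ℝ 2 u (Set.Ioi 0))
    (hupos : ∀ r : ℝ, 0 < r → 0 < u r)
    (humono : ∀ r : ℝ, 0 < r → deriv u r ≤ 0)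
    (heq : ∀ r : ℝ, 0 < r →
      deriv (deriv u) r
        = u r - 2 * m * u r ^ (1 + 2 * k) - ((n : ℝ) - 1) / r * deriv u r) :
    (∀ r₀ : ℝ, 0 < r₀ → deriv u r₀ = 0 → 2 * m * u r₀ ^ (2 * k) = 1) ∧
    ∀ r : ℝ, 0 < r → 2 * m * u r ^ (2 * k) ≠ 1 → deriv u r < 0 := by
  have main : ∀ r₀ : ℝ, 0 < r₀ → deriv u r₀ = 0 → 2 * m * u r₀ ^ (2 * k) = 1 := by
    intro r₀ hr₀ hd
    -- deriv u has a local max at r₀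
    have hmax : IsLocalMax (deriv u) r₀ := by
      filter_upwards [isOpen_Ioi.mem_nhds (show r₀ ∈ Set.Ioi (0:ℝ) from hr₀)] with x hx
      rw [hd]
      exact humono x hx
    have hdd : deriv (deriv u) r₀ = 0 := hmax.deriv_eq_zero
    have h := heq r₀ hr₀
    rw [hdd, hd] at h
    have hpos := hupos r₀ hr₀
    have hrpow : u r₀ ^ (1 + 2 * k) = u r₀ * u r₀ ^ (2 * k) := by
      rw [Real.rpow_add hpos, Real.rpow_one]
    rw [hrpow] at h
    have : u r₀ * (1 - 2 * m * u r₀ ^ (2 * k)) = 0 := by linear_combination -h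
    rcases mul_eq_zero.1 this with h' | h'
    · exact absurd h' (ne_of_gt hpos)
    · linarith
  refine ⟨main, fun r hr hne => ?_⟩
  rcases lt_or_eq_of_le (humono r hr) with h | h
  · exact h
  · exact absurd (main r hr h) hne
end

section
/- Let n ≥ 1 be an integer, m > 0, k > 0. Let u: [0,∞) → ℝ be twice continuously differentiable, strictly positive, bounded, nonincreasing (u'(r) ≤ 0 for all r), with u'(0) = 0, such that u'(r)/r remains bounded as r → 0⁺, and such that u''(r) = u(r) − 2m u(r)^{1+2k} − ((n−1)/r) u'(r) for all r > 0. Then there exists c₁ < ∞ such that |u'(r)/u(r)| ≤ c₁ r/√(1+r²) for all r > 0. -/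
/-!
`ψ = -u'/u ≥ 0` solves the Riccati equation `ψ' = ψ² - ((n-1)/r) ψ + 2m u^{2k} - 1`. For
`r ≥ δ` the drift term is at most `(|n-1|/δ) ψ`, so once `ψ` exceeds `M = 2(|n-1|/δ + 1)` it
satisfies `ψ' ≥ ψ²/2` and would blow up in finite time; hence `ψ ≤ M` on `[δ, ∞)`. On `(0, δ)`
the bound `|u'| ≤ C r` and the positive minimum of `u` on `[0, δ]` give `ψ ≤ K r`, and the two
bounds combine into `ψ ≤ c₁ r/⟨r⟩`.
-/

open Set

theorem lt_of_mul_sq_le_deriv {ψ ψ' : ℝ → ℝ} {r₀ M c : ℝ} (hM : 0 < M) (hc : 0 < c)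
    (hψ : ∀ x, r₀ ≤ x → HasDerivAt ψ (ψ' x) x)
    (hψ' : ∀ x, r₀ ≤ x → M ≤ ψ x → c * ψ x ^ 2 ≤ ψ' x) : ψ r₀ < M := by
  by_contra! hr₀
  have hcont : ∀ b, ContinuousOn ψ (Icc r₀ b) := fun b x hx =>
    (hψ x hx.1).continuousAt.continuousWithinAt
  have hge : ∀ x, r₀ ≤ x → M ≤ ψ x := fun x hx =>
    image_le_of_deriv_right_lt_deriv_boundary' continuousOn_const
      (fun y _ => hasDerivWithinAt_const y _ M) hr₀ (hcont x)
      (fun y hy => (hψ y hy.1).hasDerivWithinAt)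
      (fun y hy hMy => (mul_pos hc (pow_pos hM 2)).trans_le (hMy ▸ hψ' y hy.1 hMy.le))
      ⟨hx, le_rfl⟩
  have hpos : ∀ x, r₀ ≤ x → 0 < ψ x := fun x hx => hM.trans_le (hge x hx)
  -- `1 / ψ` decreases at rate at least `c`, so it would vanish at `r₀ + 1 / (c ψ r₀)`.
  set b := r₀ + (c * ψ r₀)⁻¹
  have hb : r₀ ≤ b := le_add_of_nonneg_right (inv_pos.2 (mul_pos hc (hpos r₀ le_rfl))).le
  have hinv : (ψ b)⁻¹ ≤ (ψ r₀)⁻¹ - c * (b - r₀) :=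
    image_le_of_deriv_right_le_deriv_boundary (f' := fun x => -ψ' x / ψ x ^ 2)
      (B := fun x => (ψ r₀)⁻¹ - c * (x - r₀)) (B' := fun _ => -c)
      ((hcont b).inv₀ fun x hx => (hpos x hx.1).ne')
      (fun x hx => ((hψ x hx.1).inv (hpos x hx.1).ne').hasDerivWithinAt) (by simp)
      (by fun_prop) (fun x _ => by
        simpa using (((hasDerivAt_id x).sub_const r₀).const_mul c).const_sub _
          |>.hasDerivWithinAt)
      (fun x hx => by
        rw [neg_div, neg_le_neg_iff, le_div_iff₀ (pow_pos (hpos x hx.1) 2)]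
        exact hψ' x hx.1 (hge x hx.1))
      ⟨hb, le_rfl⟩
  have : c * (b - r₀) = (ψ r₀)⁻¹ := by
    simp only [b, add_sub_cancel_left, mul_inv, ← mul_assoc, mul_inv_cancel₀ hc.ne', one_mul]
  linarith [inv_pos.2 (hpos b hb)]

theorem hasDerivAt_neg_div_riccati {f f' : ℝ → ℝ} {x d : ℝ} (hf : HasDerivAt f (f' x) x)
    (hf' : HasDerivAt f' d x) (hx : f x ≠ 0) :
    HasDerivAt (fun y => -(f' y / f y)) ((f' x / f x) ^ 2 - d / f x) x :=
  (hf'.div hf hx).neg.congr_deriv (by field_simp; ring)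

theorem neg_div_le_of_radial {u u' u'' : ℝ → ℝ} {a m p δ : ℝ} (hm : 0 ≤ m) (hδ : 0 < δ)
    (hu : ∀ r, 0 < r → HasDerivAt u (u' r) r) (hu' : ∀ r, 0 < r → HasDerivAt u' (u'' r) r)
    (hpos : ∀ r, 0 < r → 0 < u r) (hmono : ∀ r, 0 < r → u' r ≤ 0)
    (heq : ∀ r, 0 < r → u'' r = u r - 2 * m * u r ^ p - a / r * u' r) :
    ∀ r, δ ≤ r → -(u' r / u r) ≤ 2 * (|a| / δ + 1) := by
  intro r₀ hr₀
  have hr0 : ∀ r, r₀ ≤ r → 0 < r := fun r hr => hδ.trans_le (hr₀.trans hr)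
  refine (lt_of_mul_sq_le_deriv (by positivity) one_half_pos (fun r hr =>
    hasDerivAt_neg_div_riccati (hu r (hr0 r hr)) (hu' r (hr0 r hr)) (hpos r (hr0 r hr)).ne')
    fun r hr hM => ?_).le
  have hur := hpos r (hr0 r hr)
  set ψ := -(u' r / u r)
  have hψ : 0 ≤ ψ :=
    neg_nonneg.2 (div_nonpos_of_nonpos_of_nonneg (hmono r (hr0 r hr)) hur.le)
  have hsource : 0 ≤ 2 * m * u r ^ p / u r := by positivity
  have hdrift : a / r * ψ ≤ |a| / δ * ψ := mul_le_mul_of_nonneg_right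
    ((div_le_div_of_nonneg_right (le_abs_self a) (hr0 r hr).le).trans
      (div_le_div_of_nonneg_left (abs_nonneg a) hδ (hr₀.trans hr))) hψ
  have hriccati :
      (u' r / u r) ^ 2 - u'' r / u r = ψ ^ 2 - a / r * ψ + 2 * m * u r ^ p / u r - 1 := by
    rw [heq r (hr0 r hr)]
    simp only [ψ]
    field_simp
    ring
  rw [hriccati]
  clear_value ψ
  nlinarith [mul_le_mul_of_nonneg_left hM hψ, div_nonneg (abs_nonneg a) hδ.le]

theorem exists_abs_div_le_mul_of_abs_le_mul {u v : ℝ → ℝ} {C δ : ℝ} (hδ : 0 < δ)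
    (hu : ContinuousOn u (Icc 0 δ)) (hpos : ∀ r ∈ Icc 0 δ, 0 < u r)
    (hv : ∀ r, 0 < r → r < δ → |v r| ≤ C * r) :
    ∃ K, ∀ r, 0 < r → r < δ → |v r / u r| ≤ K * r := by
  obtain ⟨r₁, hr₁, hmin⟩ := isCompact_Icc.exists_isMinOn (nonempty_Icc.2 hδ.le) hu
  refine ⟨C / u r₁, fun r hr₀ hrδ => ?_⟩
  have hr : r ∈ Icc 0 δ := ⟨hr₀.le, hrδ.le⟩
  rw [abs_div, abs_of_pos (hpos r hr), div_mul_eq_mul_div]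
  exact div_le_div₀ ((abs_nonneg _).trans (hv r hr₀ hrδ)) (hv r hr₀ hrδ) (hpos r₁ hr₁) (hmin hr)

theorem div_sqrt_one_add_sq_le {s t : ℝ} (hs : 0 ≤ s) (hst : s ≤ t) :
    s / √(1 + s ^ 2) ≤ t / √(1 + t ^ 2) := by
  rw [div_le_div_iff₀ (by positivity) (by positivity)]
  have h : √(s ^ 2 * (1 + t ^ 2)) ≤ √(t ^ 2 * (1 + s ^ 2)) :=
    Real.sqrt_le_sqrt (by nlinarith [pow_le_pow_left₀ hs hst 2])
  rwa [Real.sqrt_mul (sq_nonneg _), Real.sqrt_mul (sq_nonneg _), Real.sqrt_sq hs,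
    Real.sqrt_sq (hs.trans hst)] at h

theorem exists_le_mul_div_sqrt_one_add_sq {f : ℝ → ℝ} {δ K M : ℝ} (hδ : 0 < δ)
    (hsmall : ∀ r, 0 < r → r < δ → f r ≤ K * r) (hlarge : ∀ r, δ ≤ r → f r ≤ M) :
    ∃ c, ∀ r, 0 < r → f r ≤ c * r / √(1 + r ^ 2) := by
  refine ⟨√(1 + δ ^ 2) * (|K| + |M| / δ), fun r hr => ?_⟩
  have hsδ : 0 < √(1 + δ ^ 2) := by positivity
  set q := r / √(1 + r ^ 2)
  have hq : 0 ≤ q := by positivity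
  rw [mul_div_assoc]
  rcases lt_or_ge r δ with hrδ | hrδ
  · have hrq : r ≤ √(1 + δ ^ 2) * q := by
      rw [mul_div_left_comm]
      exact le_mul_of_one_le_right hr.le
        ((one_le_div (by positivity)).2 (Real.sqrt_le_sqrt (by nlinarith)))
    calc f r ≤ |K| * r := (hsmall r hr hrδ).trans (by gcongr; exact le_abs_self K)
      _ ≤ |K| * (√(1 + δ ^ 2) * q) := by gcongr
      _ ≤ _ := by nlinarith [div_nonneg (abs_nonneg M) hδ.le, mul_nonneg hsδ.le hq]
  · have hδq : δ ≤ √(1 + δ ^ 2) * q := by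
      rw [← div_le_iff₀' hsδ]
      exact div_sqrt_one_add_sq_le hδ.le hrδ
    calc f r ≤ |M| := (hlarge r hrδ).trans (le_abs_self M)
      _ ≤ |M| / δ * (√(1 + δ ^ 2) * q) := by
        rw [div_mul_eq_mul_div, le_div_iff₀ hδ]
        gcongr
      _ ≤ _ := by nlinarith [abs_nonneg K, mul_nonneg hsδ.le hq]

theorem stmt16_general (n : ℕ) (m k : ℝ) (hm : 0 < m)
    (u : ℝ → ℝ) (hu : ContDiffOn ℝ 2 u (Set.Ici 0))
    (hupos : ∀ r : ℝ, 0 ≤ r → 0 < u r)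
    (humono : ∀ r : ℝ, 0 ≤ r → deriv u r ≤ 0)
    (hu'r : ∃ C : ℝ, ∃ δ > 0, ∀ r : ℝ, 0 < r → r < δ → |deriv u r| ≤ C * r)
    (heq : ∀ r : ℝ, 0 < r →
      deriv (deriv u) r
        = u r - 2 * m * u r ^ (1 + 2 * k) - ((n : ℝ) - 1) / r * deriv u r) :
    ∃ c₁ : ℝ, ∀ r : ℝ, 0 < r →
      |deriv u r / u r| ≤ c₁ * r / Real.sqrt (1 + r ^ 2) := by
  obtain ⟨C, δ, hδ, hC⟩ := hu'r
  have hu₀ : ContDiffOn ℝ 2 u (Ioi 0) := hu.mono Ioi_subset_Ici_self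
  have hu₁ : ∀ r, 0 < r → HasDerivAt u (deriv u r) r := fun r hr =>
    ((hu₀.differentiableOn (by norm_num) r hr).differentiableAt (Ioi_mem_nhds hr)).hasDerivAt
  have hu₂ : ∀ r, 0 < r → HasDerivAt (deriv u) (deriv (deriv u) r) r := fun r hr =>
    (((hu₀.deriv_of_isOpen isOpen_Ioi (m := 1) (by norm_num)).differentiableOn one_ne_zero r
      hr).differentiableAt (Ioi_mem_nhds hr)).hasDerivAt
  obtain ⟨K, hK⟩ := exists_abs_div_le_mul_of_abs_le_mul hδ
    (hu.continuousOn.mono Icc_subset_Ici_self) (fun r hr => hupos r hr.1) hC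
  refine exists_le_mul_div_sqrt_one_add_sq (M := 2 * (|(n : ℝ) - 1| / δ + 1)) hδ hK fun r hr => ?_
  have hr₀ : 0 < r := hδ.trans_le hr
  rw [abs_of_nonpos (div_nonpos_of_nonpos_of_nonneg (humono r hr₀.le) (hupos r hr₀.le).le)]
  exact neg_div_le_of_radial hm.le hδ hu₁ hu₂ (fun r hr => hupos r hr.le)
    (fun r hr => humono r hr.le) heq r hr

/-- Lemma `up-u-bounded`: `|u'/u| ≤ c₁ r/⟨r⟩`:
for a strictly positive, bounded, nonincreasing `C²` solution of the radial
equation `u'' = u − 2m u^{1+2k} − ((n−1)/r) u'` on `[0,∞)` with `u'(0) = 0` and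
`u'(r)/r` bounded near `0`, there is `c₁ < ∞` with
`|u'(r)/u(r)| ≤ c₁ r/√(1+r²)` for all `r > 0`. -/
theorem stmt16 (n : ℕ) (hn : 1 ≤ n) (m k : ℝ) (hm : 0 < m) (hk : 0 < k)
    (u : ℝ → ℝ) (hu : ContDiffOn ℝ 2 u (Set.Ici 0))
    (hupos : ∀ r : ℝ, 0 ≤ r → 0 < u r)
    (hubdd : ∃ B : ℝ, ∀ r : ℝ, 0 ≤ r → u r ≤ B)
    (humono : ∀ r : ℝ, 0 ≤ r → deriv u r ≤ 0)
    (hu'0 : deriv u 0 = 0)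
    (hu'r : ∃ C : ℝ, ∃ δ > 0, ∀ r : ℝ, 0 < r → r < δ → |deriv u r| ≤ C * r)
    (heq : ∀ r : ℝ, 0 < r →
      deriv (deriv u) r
        = u r - 2 * m * u r ^ (1 + 2 * k) - ((n : ℝ) - 1) / r * deriv u r) :
    ∃ c₁ : ℝ, ∀ r : ℝ, 0 < r →
      |deriv u r / u r| ≤ c₁ * r / Real.sqrt (1 + r ^ 2) :=
  stmt16_general n m k hm u hu hupos humono hu'r heq
end

section
/- Let M ≥ 1 and n ≥ 1 be integers, and let σ₁, …, σ_n be complex M×M matrices satisfying σ_j* σ_l + σ_l* σ_j = 2δ_{jl} I for all 1 ≤ j, l ≤ n, where σ* denotes the conjugate transpose, δ_{jl} the Kronecker delta, and I the M×M identity matrix. Then σ_j σ_l* + σ_l σ_j* = 2δ_{jl} I for all 1 ≤ j, l ≤ n. -/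
open Matrix

/-- the two block anticommutation relations are equivalent:
if complex `M×M` matrices `σ₁, …, σ_n` satisfy
`σ_j* σ_l + σ_l* σ_j = 2δ_{jl} I`, then also `σ_j σ_l* + σ_l σ_j* = 2δ_{jl} I`. -/
theorem stmt18 (M n : ℕ) (hM : 1 ≤ M) (hn : 1 ≤ n)
    (σ : Fin n → Matrix (Fin M) (Fin M) ℂ)
    (h : ∀ j l : Fin n,
      (σ j)ᴴ * σ l + (σ l)ᴴ * σ j
        = if j = l then (2 : ℂ) • (1 : Matrix (Fin M) (Fin M) ℂ) else 0) :
    ∀ j l : Fin n,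
      σ j * (σ l)ᴴ + σ l * (σ j)ᴴ
        = if j = l then (2 : ℂ) • (1 : Matrix (Fin M) (Fin M) ℂ) else 0 := by
  have hunit : ∀ j : Fin n, (σ j)ᴴ * σ j = 1 := by
    intro j
    have hj := h j j
    rw [if_pos rfl] at hj
    have h2 : (2 : ℂ) • ((σ j)ᴴ * σ j) = (2 : ℂ) • (1 : Matrix (Fin M) (Fin M) ℂ) := by
      rw [two_smul]; exact hj
    exact smul_right_injective _ (two_ne_zero) h2
  have hunit' : ∀ j : Fin n, σ j * (σ j)ᴴ = 1 := fun j =>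
    mul_eq_one_comm.mp (hunit j)
  intro j l
  by_cases hjl : j = l
  · subst hjl
    rw [if_pos rfl, hunit' j, two_smul]
  · have hne := h j l
    rw [if_neg hjl] at hne
    rw [if_neg hjl]
    calc σ j * (σ l)ᴴ + σ l * (σ j)ᴴ
        = σ j * ((σ l)ᴴ * (σ j * (σ j)ᴴ)) + (σ j * (σ j)ᴴ) * (σ l * (σ j)ᴴ) := by
          rw [hunit' j]; simp
      _ = σ j * ((σ j)ᴴ * σ l + (σ l)ᴴ * σ j) * (σ j)ᴴ := by noncomm_ring
      _ = 0 := by rw [hne, Matrix.mul_zero, Matrix.zero_mul]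
end
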